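/- arXiv:1412.2203 — 10 statements merged into one kernel-verified Lean document; each statement's English description precedes it below -/
import Mathlib

section
/- Let p be a prime, R a Noetherian commutative ring of characteristic p, M a finitely generated R-module, e ≥ 1 an integer, and φ : M → M an additive map satisfying φ(r^{p^e} m) = r φ(m) for all r ∈ R and m ∈ M. Then for every n ≥ 1 the image φ^n(M) of the n-fold composite of φ is an R-submodule of M, the chain φ(M) ⊇ φ²(M) ⊇ φ³(M) ⊇ ⋯ is descending, and there exists n₀ such that φ^n(M) = φ^{n₀}(M) for all n ≥ n₀. -/
/-!
Write `Nₙ = φⁿ(M)` and `q = pᵉ`. The colon ideals `(Nₙ₊₁ : Nₙ)` increase with `n`, so from some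
`a` on they all equal one ideal `I`. Since `φ (s ^ q • x) = s • φ x`, the inclusion
`I • Nₙ ⊆ Nₙ₊₁` improves to `I • Nₙ ⊆ Nₙ₊q^k` for `n ≥ a + k`. If the chain never stabilised, `I`
would be proper; localise at a minimal prime `P` of `I`. There the localised chain is still
strictly decreasing, because `(Nₙ₊₁ : Nₙ) = I ⊆ P`, and `I` becomes primary to the maximal ideal
`𝔪`, say `𝔪 ^ c ⊆ I`. Hence `𝔪 ^ (c (k + 1)) Nₐ ⊆ Nₐ₊ₖ₊q^k` after localising: a strict chain of
length `k + q ^ k` lies between `Nₐ` and `𝔪 ^ (c (k + 1)) Nₐ`. But the length of `Y / 𝔪 ^ c Y`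
grows only polynomially in `c`, as its `i`-th layer is generated by the monomials of degree `i` in
generators of `𝔪` times generators of `Y`; this is impossible for large `k`.
-/

open Submodule IsLocalRing Pointwise Finset

theorem Finset.card_pow_le_add_one_pow {α : Type*} [CommMonoid α] [DecidableEq α]
    (s : Finset α) (n : ℕ) : #(s ^ n) ≤ (n + 1) ^ #s := by
  let monomial : (s → ℕ) → α := fun v => ∏ x : s, (x : α) ^ v x
  calc #(s ^ n) ≤ #((Fintype.piFinset fun _ : s => range (n + 1)).image monomial) := by
        refine card_le_card fun a ha => ?_
        obtain ⟨f, rfl⟩ := Finset.mem_pow.mp ha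
        refine mem_image.mpr ⟨fun x => #{i | f i = x}, ?_, ?_⟩
        · simpa [Nat.lt_succ_iff] using fun x hx => (card_filter_le _ _).trans (by simp)
        · simp only [monomial, List.prod_ofFn, ← prod_fiberwise' univ f, prod_const]
    _ ≤ (n + 1) ^ #s := card_image_le.trans (by simp)

theorem Nat.exists_mul_add_one_pow_lt_pow {q : ℕ} (hq : 2 ≤ q) (B d : ℕ) :
    ∃ k, B * (k + 1) ^ d < q ^ k := by
  have h := ((tendsto_pow_const_div_const_pow_of_one_lt d one_lt_two).comp
    (Filter.tendsto_add_atTop_nat 1)).const_mul (2 * B : ℝ)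
  obtain ⟨k, hk⟩ := (h.eventually (gt_mem_nhds (by norm_num : (2 * B : ℝ) * 0 < 1))).exists
  refine ⟨k, lt_of_lt_of_le ?_ (Nat.pow_le_pow_left hq k)⟩
  simp only [Function.comp_apply, Nat.cast_add, Nat.cast_one] at hk
  rw [mul_div_assoc', div_lt_one (by positivity), pow_succ] at hk
  exact_mod_cast (by linarith : (B : ℝ) * (k + 1) ^ d < 2 ^ k)

theorem Submodule.pow_smul_le_of_smul_le {R M : Type*} [CommSemiring R] [AddCommMonoid M]
    [Module R M] {I : Ideal R} {X : ℕ → Submodule R M} {b t : ℕ}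
    (h : ∀ n ≥ b, I • X n ≤ X (n + t)) (j : ℕ) : ∀ n ≥ b, I ^ j • X n ≤ X (n + j * t) := by
  induction j with
  | zero => simp
  | succ j ih =>
    intro n hn
    calc I ^ (j + 1) • X n = I • I ^ j • X n := by rw [pow_succ', mul_smul]
      _ ≤ I • X (n + j * t) := smul_mono_right _ (ih n hn)
      _ ≤ X (n + (j + 1) * t) := by
        rw [add_mul, one_mul, ← add_assoc]; exact h _ (by omega)

theorem Submodule.smul_le_iff_le_colon {R M : Type*} [CommRing R] [AddCommGroup M] [Module R M]
    {I : Ideal R} {N N' : Submodule R M} :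
    I • N' ≤ N ↔ I ≤ N.colon N' := by
  refine ⟨fun h r hr => mem_colon.mpr fun x hx => h (smul_mem_smul hr hx), fun h => ?_⟩
  exact smul_le.mpr fun r hr x hx => mem_colon.mp (h hr) x hx

section Length
variable {R M : Type*} [CommRing R] [AddCommGroup M] [Module R M]

theorem Module.length_quotient_of_le {N N' : Submodule R M} (h : N ≤ N') :
    Module.length R (M ⧸ N) = Module.length R (M ⧸ N') + Module.length R (N'.map N.mkQ) := by
  rw [Module.length_eq_add_of_exact _ _ (N'.map N.mkQ).injective_subtype
    (N'.map N.mkQ).mkQ_surjective (LinearMap.exact_subtype_mkQ _),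
    (quotientQuotientEquivQuotient N N' h).length_eq, add_comm]

theorem Module.length_quotient_smul (I : Ideal R) (N : Submodule R M) :
    Module.length R (M ⧸ I • N) =
      Module.length R (M ⧸ N) + Module.length R (N ⧸ I • (⊤ : Submodule R N)) := by
  let f := (I • N).mkQ ∘ₗ N.subtype
  have hker : LinearMap.ker f = I • ⊤ := by
    rw [LinearMap.ker_comp, ker_mkQ, ← comap_map_eq_of_injective N.injective_subtype (I • ⊤),
      map_smul'', map_subtype_top]
  have hrange : LinearMap.range f = N.map (I • N).mkQ := by
    rw [LinearMap.range_comp, range_subtype]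
  rw [Module.length_quotient_of_le (smul_le_right), ← hrange, ← hker,
    f.quotKerEquivRange.length_eq]

theorem Module.le_length_quotient_of_strictAnti {X : ℕ → Submodule R M} (hX : StrictAnti X)
    {N : Submodule R M} {T : ℕ} (hN : N ≤ X T) : (T : ℕ∞) ≤ Module.length R (M ⧸ N) := by
  have key : ∀ j : ℕ, (j : ℕ∞) ≤ Order.coheight (X j) := by
    intro j
    induction j with
    | zero => simp
    | succ j ih =>
      push_cast
      exact (by gcongr : (j : ℕ∞) + 1 ≤ _ + 1).trans
        (Order.coheight_add_one_le (hX j.lt_succ_self))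
  rw [Module.length_quotient]
  exact (key T).trans (Order.coheight_anti hN)

end Length

section LocalRing
variable {A M : Type*} [CommRing A] [IsLocalRing A] [AddCommGroup M] [Module A M]

theorem IsLocalRing.length_quotient_maximalIdeal_smul_top {N : Submodule A M} (hN : N.FG) :
    Module.length A (N ⧸ maximalIdeal A • (⊤ : Submodule A N)) = N.spanFinrank := by
  let := Ideal.Quotient.field (maximalIdeal A)
  have : Module.Finite A N := Module.Finite.iff_fg.mpr hN
  have : Module.Finite (A ⧸ maximalIdeal A) (N ⧸ maximalIdeal A • (⊤ : Submodule A N)) :=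
    Module.Finite.of_restrictScalars_finite A _ _
  rw [Module.length_eq_of_surjective (R := A ⧸ maximalIdeal A) Ideal.Quotient.mk_surjective,
    Module.length_eq_finrank, spanFinrank_eq_finrank_quotient N hN]

theorem IsLocalRing.exists_length_quotient_pow_smul_top_le [IsNoetherianRing A]
    [Module.Finite A M] : ∃ B d : ℕ, ∀ c : ℕ,
      Module.length A (M ⧸ maximalIdeal A ^ c • (⊤ : Submodule A M)) ≤ (B * (c + 1) ^ d : ℕ) := by
  classical
  obtain ⟨Sm, hSm⟩ := (maximalIdeal A).fg_of_isNoetherianRing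
  obtain ⟨SM, hSM⟩ := Module.Finite.fg_top (R := A) (M := M)
  have hlayer (i : ℕ) : Module.length A (M ⧸ maximalIdeal A ^ (i + 1) • (⊤ : Submodule A M)) ≤
      Module.length A (M ⧸ maximalIdeal A ^ i • (⊤ : Submodule A M)) +
        (#SM * (i + 1) ^ #Sm : ℕ) := by
    have hspan : maximalIdeal A ^ i • (⊤ : Submodule A M) = span A ↑(Sm ^ i • SM) := by
      rw [← hSm, ← hSM, Ideal.span, span_pow, span_smul_span, Finset.coe_smul, Finset.coe_pow]
    rw [pow_succ', mul_smul, Module.length_quotient_smul,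
      length_quotient_maximalIdeal_smul_top (hspan ▸ fg_span (finite_toSet _))]
    gcongr
    calc (maximalIdeal A ^ i • ⊤ : Submodule A M).spanFinrank ≤ #(Sm ^ i • SM) := by
          rw [hspan, ← Set.ncard_coe_finset]
          exact spanFinrank_span_le_ncard_of_finite (finite_toSet _)
      _ ≤ #(Sm ^ i) * #SM := card_smul_le
      _ ≤ #SM * (i + 1) ^ #Sm := by
          rw [mul_comm]; exact Nat.mul_le_mul_left _ (card_pow_le_add_one_pow Sm i)
  have hsum (c : ℕ) : Module.length A (M ⧸ maximalIdeal A ^ c • (⊤ : Submodule A M)) ≤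
      (∑ i ∈ range c, #SM * (i + 1) ^ #Sm : ℕ) := by
    induction c with
    | zero => simp
    | succ c ih =>
      rw [sum_range_succ, Nat.cast_add]
      exact (hlayer c).trans (by gcongr)
  refine ⟨#SM, #Sm + 1, fun c => (hsum c).trans (Nat.cast_le.mpr ?_)⟩
  calc ∑ i ∈ range c, #SM * (i + 1) ^ #Sm ≤ ∑ _i ∈ range c, #SM * (c + 1) ^ #Sm :=
        sum_le_sum fun i hi => by gcongr; exact (mem_range.mp hi).le
    _ ≤ #SM * (c + 1) ^ (#Sm + 1) := by
        rw [sum_const, card_range, smul_eq_mul, pow_succ]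
        nlinarith [Nat.zero_le (#SM * (c + 1) ^ #Sm)]

theorem IsLocalRing.exists_le_of_strictAnti_of_pow_smul_le [IsNoetherianRing A]
    [Module.Finite A M] (Y : Submodule A M) : ∃ B d : ℕ, ∀ X : ℕ → Submodule A M, StrictAnti X →
      X 0 ≤ Y → ∀ c T : ℕ, maximalIdeal A ^ c • Y ≤ X T → T ≤ B * (c + 1) ^ d := by
  obtain ⟨B, d, hB⟩ := exists_length_quotient_pow_smul_top_le (A := A) (M := Y)
  refine ⟨B, d, fun X hX hX0 c T hT => ?_⟩
  have hXY (k : ℕ) : X k ≤ Y := (hX.antitone k.zero_le).trans hX0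
  have hX' : StrictAnti fun j => (X j).comap Y.subtype := fun i j hij => by
    refine lt_of_le_of_ne (comap_mono (hX hij).le) fun h => (hX hij).ne ?_
    simpa [map_comap_subtype, inf_eq_right.mpr (hXY _)] using congrArg (map Y.subtype) h
  have hT' : maximalIdeal A ^ c • ⊤ ≤ (X T).comap Y.subtype := by
    rwa [← map_le_iff_le_comap, map_smul'', map_subtype_top]
  exact_mod_cast (Module.le_length_quotient_of_strictAnti hX' hT').trans (hB c)

theorem IsLocalRing.not_strictAnti_of_pow_mul_smul_le [IsNoetherianRing A] [Module.Finite A M]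
    {q : ℕ} (hq : 2 ≤ q) {X : ℕ → Submodule A M} {c₀ : ℕ}
    (h : ∀ k, maximalIdeal A ^ (c₀ * (k + 1)) • X 0 ≤ X (k + q ^ k)) : ¬ StrictAnti X := by
  intro hX
  obtain ⟨B, d, hB⟩ := exists_le_of_strictAnti_of_pow_smul_le (X 0)
  obtain ⟨k, hk⟩ := Nat.exists_mul_add_one_pow_lt_pow hq (B * (c₀ + 1) ^ d) d
  have hT := hB X hX le_rfl _ _ (h k)
  have : B * (c₀ * (k + 1) + 1) ^ d ≤ B * (c₀ + 1) ^ d * (k + 1) ^ d := by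
    rw [mul_assoc, ← mul_pow]
    gcongr
    nlinarith
  omega

end LocalRing

section Localization
variable {R M : Type*} [CommRing R] [AddCommGroup M] [Module R M] {P : Ideal R} [P.IsPrime]

theorem Submodule.exists_mem_forall_smul_notMem_of_colon_le {N N' : Submodule R M}
    (hN' : N'.FG) (h : N.colon N' ≤ P) : ∃ x ∈ N', ∀ s ∉ P, s • x ∉ N := by
  have : Module.Finite R N' := Module.Finite.iff_fg.mpr hN'
  have hann : Module.annihilator R (N' ⧸ N.comap N'.subtype) = N.colon N' := by
    ext r; simp [annihilator_quotient, mem_colon]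
  obtain ⟨x, hx⟩ := Module.mem_support_iff'.mp
    ((Module.mem_support_iff_of_finite (p := ⟨P, ‹_›⟩)).mpr (hann ▸ h))
  obtain ⟨⟨x, hxN'⟩, rfl⟩ := Quotient.mk_surjective _ x
  refine ⟨x, hxN', fun s hs hsx => hx s hs ?_⟩
  rw [← Quotient.mk_smul, Quotient.mk_eq_zero]
  exact hsx

variable {S M' : Type*} [CommRing S] [Algebra R S] [IsLocalization P.primeCompl S]
  [AddCommGroup M'] [Module R M'] [Module S M'] [IsScalarTower R S M']

theorem Submodule.localized'_lt_localized'_of_colon_le (f : M →ₗ[R] M')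
    [IsLocalizedModule P.primeCompl f] {N N' : Submodule R M} (hle : N ≤ N') (hN' : N'.FG)
    (h : N.colon N' ≤ P) : N.localized' S P.primeCompl f < N'.localized' S P.primeCompl f := by
  refine lt_of_le_not_ge (localized'_le_localized'_of_smul_le S _ f 1 (by simpa using hle))
    fun hge => ?_
  obtain ⟨x, hx, hxN⟩ := exists_mem_forall_smul_notMem_of_colon_le hN' h
  obtain ⟨y, hy, s, hys⟩ := (mem_localized' S _ f N _).mp
    (hge ((mem_localized' S _ f N' _).mpr ⟨x, hx, 1, rfl⟩))
  obtain ⟨u, hu⟩ := (IsLocalizedModule.mk'_eq_mk'_iff f y x s 1).mp hys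
  refine hxN (u * s) (P.primeCompl.mul_mem u.2 s.2) ?_
  convert N.smul_mem (u : R) hy using 1
  simpa [mul_smul, Submonoid.smul_def] using hu

theorem Submodule.exists_colon_not_le_of_smul_le [IsNoetherianRing R] [Module.Finite R M] {q : ℕ}
    (hq : 2 ≤ q) {X : ℕ → Submodule R M} (hX : Antitone X) {I : Ideal R}
    (hP : P ∈ I.minimalPrimes) {a : ℕ} (hI : ∀ k, ∀ n ≥ a + k, I • X n ≤ X (n + q ^ k)) :
    ∃ n ≥ a, ¬ (X (n + 1)).colon (X n) ≤ P := by
  by_contra! hcolon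
  let Rp := Localization.AtPrime P
  let f := LocalizedModule.mkLinearMap P.primeCompl M
  have : IsNoetherianRing Rp := IsLocalization.isNoetherianRing P.primeCompl Rp inferInstance
  have : Module.Finite Rp (LocalizedModule P.primeCompl M) :=
    Module.Finite.of_isLocalizedModule P.primeCompl f
  let C n := (X n).localized' Rp P.primeCompl f
  let J := I.map (algebraMap R Rp)
  have hJ (k : ℕ) : ∀ n ≥ a + k, J • C n ≤ C (n + q ^ k) := fun n hn => by
    dsimp only [J, C]
    rw [← Ideal.localized'_eq_map Rp P.primeCompl, ← localized'_smul]
    exact localized'_le_localized'_of_smul_le Rp _ f 1 (by simpa using hI k n hn)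
  obtain ⟨c₀, hc₀⟩ : ∃ c₀, maximalIdeal Rp ^ c₀ ≤ J := by
    refine Ideal.exists_pow_le_of_le_radical_of_fg ?_ (IsNoetherian.noetherian _)
    rw [IsLocalization.AtPrime.radical_map_of_mem_minimalPrimes Rp P I hP,
      Localization.AtPrime.map_eq_maximalIdeal]
  refine not_strictAnti_of_pow_mul_smul_le hq (X := fun j => C (a + j)) (c₀ := c₀) (fun k => ?_)
    (strictAnti_nat_of_succ_lt fun j => localized'_lt_localized'_of_colon_le f (hX (by omega))
      (IsNoetherian.noetherian _) (hcolon _ (Nat.le_add_right a j)))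
  calc maximalIdeal Rp ^ (c₀ * (k + 1)) • C (a + 0) ≤ J ^ (k + 1) • C a := by
        rw [pow_mul]; exact smul_mono_left (Ideal.pow_right_mono hc₀ _)
    _ = J • J ^ k • C a := by rw [pow_succ', Submodule.mul_smul]
    _ ≤ J • C (a + k) := smul_mono_right _
        (by simpa using pow_smul_le_of_smul_le (t := 1) (by simpa using hJ 0) k a le_rfl)
    _ ≤ C (a + (k + q ^ k)) := by rw [← add_assoc]; exact hJ k _ le_rfl

end Localization

section IterateRange
variable {R M : Type*} [CommRing R] [AddCommGroup M] [Module R M] {q : ℕ} {φ : M →+ M}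

theorem iterate_map_pow_smul (hφ : ∀ (r : R) (m : M), φ (r ^ q • m) = r • φ m) (n : ℕ) (r : R)
    (m : M) : φ^[n] (r ^ q ^ n • m) = r • φ^[n] m := by
  induction n generalizing m with
  | zero => simp
  | succ n ih =>
    rw [Function.iterate_succ_apply, pow_succ, pow_mul, hφ, ih, Function.iterate_succ_apply]

def iterateRange (hφ : ∀ (r : R) (m : M), φ (r ^ q • m) = r • φ m) (n : ℕ) : Submodule R M where
  carrier := Set.range φ^[n]
  add_mem' := by
    rintro _ _ ⟨x, rfl⟩ ⟨y, rfl⟩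
    exact ⟨x + y, iterate_map_add φ n x y⟩
  zero_mem' := ⟨0, iterate_map_zero φ n⟩
  smul_mem' := by
    rintro r _ ⟨x, rfl⟩
    exact ⟨r ^ q ^ n • x, iterate_map_pow_smul hφ n r x⟩

variable (hφ : ∀ (r : R) (m : M), φ (r ^ q • m) = r • φ m)

theorem coe_iterateRange (n : ℕ) : (iterateRange hφ n : Set M) = Set.range φ^[n] := rfl

theorem coe_iterateRange_succ (n : ℕ) :
    (iterateRange hφ (n + 1) : Set M) = φ '' iterateRange hφ n := by
  rw [coe_iterateRange, coe_iterateRange, Function.iterate_succ', Set.range_comp]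

theorem iterateRange_antitone : Antitone (iterateRange hφ) :=
  antitone_nat_of_succ_le fun n => by
    rw [← SetLike.coe_subset_coe, coe_iterateRange, coe_iterateRange, Function.iterate_succ]
    exact Set.range_comp_subset_range _ _

theorem iterateRange_eq_of_succ_eq {n : ℕ} (h : iterateRange hφ (n + 1) = iterateRange hφ n)
    {m : ℕ} (hm : n ≤ m) : iterateRange hφ m = iterateRange hφ n := by
  induction m, hm using Nat.le_induction with
  | base => rfl
  | succ m _ ih =>
    rw [← h]
    exact SetLike.coe_injective (by rw [coe_iterateRange_succ, coe_iterateRange_succ, ih])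

theorem smul_iterateRange_succ_le {I : Ideal R} {n u : ℕ}
    (h : I ^ q • iterateRange hφ n ≤ iterateRange hφ (n + u)) :
    I • iterateRange hφ (n + 1) ≤ iterateRange hφ (n + u + 1) := by
  refine smul_le.mpr fun r hr y hy => ?_
  obtain ⟨x, hx, rfl⟩ := (Set.ext_iff.mp (coe_iterateRange_succ hφ n) y).mp hy
  rw [← hφ, ← SetLike.mem_coe, coe_iterateRange_succ]
  exact Set.mem_image_of_mem φ (h (smul_mem_smul (Ideal.pow_mem_pow hr q) hx))

theorem colon_iterateRange_mono (hq : q ≠ 0) :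
    Monotone fun n => (iterateRange hφ (n + 1)).colon (iterateRange hφ n) := by
  refine monotone_nat_of_le_succ fun n => smul_le_iff_le_colon.mp ?_
  refine smul_iterateRange_succ_le hφ (le_trans (smul_mono_left (Ideal.pow_le_self hq)) ?_)
  exact smul_le_iff_le_colon.mpr le_rfl

theorem smul_iterateRange_le_of_smul_le {I : Ideal R} {a : ℕ}
    (h : ∀ n ≥ a, I • iterateRange hφ n ≤ iterateRange hφ (n + 1)) (k : ℕ) :
    ∀ n ≥ a + k, I • iterateRange hφ n ≤ iterateRange hφ (n + q ^ k) := by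
  induction k with
  | zero => simpa using h
  | succ k ih =>
    intro n hn
    obtain ⟨n, rfl⟩ : ∃ m, n = m + 1 := ⟨n - 1, by omega⟩
    have := smul_iterateRange_succ_le hφ (pow_smul_le_of_smul_le ih q n (by omega))
    rwa [add_right_comm, ← pow_succ'] at this

theorem exists_iterateRange_succ_eq [IsNoetherianRing R] [Module.Finite R M] (hq : 2 ≤ q) :
    ∃ n, iterateRange hφ (n + 1) = iterateRange hφ n := by
  by_contra! hne
  obtain ⟨a, ha⟩ := monotone_stabilizes_iff_noetherian.mpr (inferInstance : IsNoetherian R R)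
    ⟨_, colon_iterateRange_mono hφ (by omega)⟩
  set I := (iterateRange hφ (a + 1)).colon (iterateRange hφ a)
  have hsmul : ∀ n ≥ a, I • iterateRange hφ n ≤ iterateRange hφ (n + 1) :=
    fun n hn => smul_le_iff_le_colon.mpr (ha n hn).le
  have hI : I ≠ ⊤ := fun h => hne a (le_antisymm (iterateRange_antitone hφ a.le_succ)
    (by simpa [h] using hsmul a le_rfl))
  obtain ⟨P, hP⟩ := Ideal.nonempty_minimalPrimes hI
  have : P.IsPrime := hP.1.1
  obtain ⟨n, hn, hnP⟩ := exists_colon_not_le_of_smul_le hq (iterateRange_antitone hφ) hP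
    (smul_iterateRange_le_of_smul_le hφ hsmul)
  exact hnP ((ha n hn).symm.le.trans hP.1.2)

end IterateRange

theorem hsl_stabilization_general (p : ℕ) (hp : p.Prime) (e : ℕ) (he : 1 ≤ e)
    (R : Type*) [CommRing R] [IsNoetherianRing R]
    (M : Type*) [AddCommGroup M] [Module R M] [Module.Finite R M]
    (φ : M → M) (hadd : ∀ x y : M, φ (x + y) = φ x + φ y)
    (hlin : ∀ (r : R) (m : M), φ (r ^ p ^ e • m) = r • φ m) :
    (∀ n : ℕ, 1 ≤ n → ∃ N : Submodule R M, (N : Set M) = Set.range φ^[n]) ∧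
    (∀ n : ℕ, 1 ≤ n → Set.range φ^[n + 1] ⊆ Set.range φ^[n]) ∧
    (∃ n₀ : ℕ, ∀ n : ℕ, n₀ ≤ n → Set.range φ^[n] = Set.range φ^[n₀]) := by
  let ψ : M →+ M := AddMonoidHom.mk' φ hadd
  have hψ : ∀ (r : R) (m : M), ψ (r ^ p ^ e • m) = r • ψ m := hlin
  have hq : 2 ≤ p ^ e := hp.two_le.trans (Nat.le_self_pow (by omega) p)
  obtain ⟨n₀, hn₀⟩ := exists_iterateRange_succ_eq hψ hq
  refine ⟨fun n _ => ⟨iterateRange hψ n, rfl⟩,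
    fun n _ => SetLike.coe_subset_coe.mpr (iterateRange_antitone hψ n.le_succ), n₀, fun n hn => ?_⟩
  exact congrArg SetLike.coe (iterateRange_eq_of_succ_eq hψ hn₀ hn)

/-- Hartshorne–Speiser–Lyubeznik–Gabber stabilization: if `M` is a finitely generated module
over a Noetherian ring `R` of characteristic `p` and `φ : M → M` is additive and
`p⁻ᵉ`-linear (`φ (r^{pᵉ} • m) = r • φ m`), then each image `φⁿ(M)` is an `R`-submodule,
the chain of images is descending, and it stabilizes. -/
theorem hsl_stabilization (p : ℕ) (hp : p.Prime) (e : ℕ) (he : 1 ≤ e)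
    (R : Type*) [CommRing R] [IsNoetherianRing R] [CharP R p]
    (M : Type*) [AddCommGroup M] [Module R M] [Module.Finite R M]
    (φ : M → M) (hadd : ∀ x y : M, φ (x + y) = φ x + φ y)
    (hlin : ∀ (r : R) (m : M), φ (r ^ p ^ e • m) = r • φ m) :
    (∀ n : ℕ, 1 ≤ n → ∃ N : Submodule R M, (N : Set M) = Set.range φ^[n]) ∧
    (∀ n : ℕ, 1 ≤ n → Set.range φ^[n + 1] ⊆ Set.range φ^[n]) ∧
    (∃ n₀ : ℕ, ∀ n : ℕ, n₀ ≤ n → Set.range φ^[n] = Set.range φ^[n₀]) :=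
  hsl_stabilization_general p hp e he R M φ hadd hlin
end

section
/- Let p be a prime, k a perfect field of characteristic p, S = k[x₀,…,xₙ] a polynomial ring, I ⊆ S a homogeneous ideal with I ≠ S, R = S/I, and m = (x₀,…,xₙ). Write I^{[p]} for the ideal of S generated by {a^p : a ∈ I} and m^{[p]} = (x₀^p,…,xₙ^p). Then R is F-split if and only if the colon ideal (I^{[p]} : I) is not contained in m^{[p]}. -/
/-!
Let `Φ : S → S` send `c x^(p q + (p - 1))` to `c^(1/p) x^q` and kill every other monomial. It is
`p⁻¹`-linear, and because the monomials `x^b` with `b ≤ p - 1` form a basis of `S` over `S^p`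
(with `Φ(x^(p - 1 - b) x^b') = δ_(b b')`), the `p⁻¹`-linear maps of `R = S/I` are exactly the maps
`x ↦ Φ(g x)` with `g ∈ (I^[p] : I)`. Such a map sends `1` to `Φ(g)`. If `g ∈ m^[p]` then
`Φ(g) ∈ m`, so `Φ(g) ≢ 1` modulo `I ⊆ m`. Conversely, the colon ideal is homogeneous, so if it is
not contained in `m^[p]` it contains a homogeneous `g` with a monomial `x^a`, `a ≤ p - 1`; then
`Φ(x^(p - 1 - a) g)` is a nonzero constant, and rescaling it to `1` gives a splitting.
-/

open MvPolynomial DirectSum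

attribute [local instance] MvPolynomial.gradedAlgebra

section GradedRing

variable {ι σ A : Type*} [CommSemiring A] [SetLike σ A] [AddSubmonoidClass σ A] {𝒜 : ι → σ}
  [DecidableEq ι]

def Ideal.frobeniusPower (p : ℕ) (I : Ideal A) : Ideal A := Ideal.span ((· ^ p) '' (I : Set A))

theorem Ideal.IsHomogeneous.frobeniusPower [AddMonoid ι] [GradedRing 𝒜] (p : ℕ) [ExpChar A p]
    {I : Ideal A} (hI : I.IsHomogeneous 𝒜) :
    (I.frobeniusPower p).IsHomogeneous 𝒜 := by
  classical
  have hspan : I.frobeniusPower p = Ideal.span ((· ^ p) '' {a ∈ I | SetLike.IsHomogeneousElem 𝒜 a}) := by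
    refine le_antisymm (Ideal.span_le.mpr ?_) (Ideal.span_mono (Set.image_mono fun a ha ↦ ha.1))
    rintro _ ⟨a, ha, rfl⟩
    show a ^ p ∈ _
    rw [← sum_support_decompose 𝒜 a, sum_pow_char]
    exact Ideal.sum_mem _ fun i _ ↦ Ideal.subset_span ⟨_, ⟨hI i ha, i, SetLike.coe_mem _⟩, rfl⟩
  rw [hspan]
  refine Ideal.homogeneous_span _ _ ?_
  rintro _ ⟨a, ⟨-, i, hi⟩, rfl⟩
  exact ⟨p • i, SetLike.pow_mem_graded p hi⟩

variable [AddCommMonoid ι] [PartialOrder ι] [CanonicallyOrderedAdd ι] [Sub ι] [OrderedSub ι]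
  [AddLeftReflectLE ι] [GradedRing 𝒜]

theorem Ideal.IsHomogeneous.colon {I J : Ideal A} (hJ : J.IsHomogeneous 𝒜)
    (hI : I.IsHomogeneous 𝒜) : (J.colon (I : Set A)).IsHomogeneous 𝒜 := by
  classical
  intro i g hg
  rw [Submodule.mem_colon] at hg ⊢
  intro f hf
  rw [← sum_support_decompose 𝒜 f, smul_eq_mul, Finset.mul_sum]
  refine J.sum_mem fun j _ ↦ ?_
  have h := coe_decompose_mul_of_right_mem_of_le (a := g) (n := i + j) 𝒜
    (SetLike.coe_mem (decompose 𝒜 f j)) le_add_self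
  rw [add_tsub_cancel_right] at h
  rw [← h]
  exact hJ _ (hg _ (hI j hf))

end GradedRing

structure IsPInvLinear (p : ℕ) {R : Type*} [Semiring R] (φ : R → R) : Prop where
  map_add : ∀ x y, φ (x + y) = φ x + φ y
  map_pow_mul : ∀ r x, φ (r ^ p * x) = r * φ x

namespace MvPolynomial

variable {σ : Type*}

theorem isHomogeneous_homogeneousSubmodule_iff {R : Type*} [CommSemiring R]
    {I : Ideal (MvPolynomial σ R)} :
    I.IsHomogeneous (homogeneousSubmodule σ R) ↔ ∀ f ∈ I, ∀ d, homogeneousComponent d f ∈ I := by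
  refine ⟨fun h f hf d ↦ homogeneousComponent_mem_of_mem h hf d, fun h d f hf ↦ ?_⟩
  convert h f hf d using 1
  exact decomposition.decompose'_apply f d

theorem mem_span_range_X_pow_iff {R : Type*} [CommSemiring R] {f : MvPolynomial σ R} {n : ℕ} :
    f ∈ Ideal.span (Set.range fun i ↦ (X i : MvPolynomial σ R) ^ n) ↔
      ∀ a ∈ f.support, ∃ i, n ≤ a i := by
  classical
  have hrange : Set.range (fun i ↦ (X i : MvPolynomial σ R) ^ n) =
      (fun s ↦ monomial s 1) '' Set.range fun i ↦ Finsupp.single i n := by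
    rw [← Set.range_comp]
    simp [Function.comp_def, X_pow_eq_monomial]
  rw [hrange, mem_ideal_span_monomial_image]
  simp [Finsupp.single_le_iff]

theorem constantCoeff_eq_zero_of_mem {R : Type*} [Field R] {I : Ideal (MvPolynomial σ R)}
    (hI : I ≠ ⊤) (hhom : I.IsHomogeneous (homogeneousSubmodule σ R)) {f : MvPolynomial σ R}
    (hf : f ∈ I) : constantCoeff f = 0 := by
  by_contra hc
  have h0 := homogeneousComponent_mem_of_mem hhom hf 0
  rw [homogeneousComponent_zero, ← constantCoeff_eq] at h0
  exact hI (I.eq_top_of_isUnit_mem h0 ((Ne.isUnit hc).map C))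

section SocleExponent

variable [Finite σ] (p : ℕ)

noncomputable def socleExponent : σ →₀ ℕ := Finsupp.equivFunOnFinite.symm fun _ ↦ p - 1

@[simp] theorem socleExponent_apply (i : σ) : socleExponent p i = p - 1 := rfl

variable {p}

theorem smul_add_socleExponent_tsub_smul {a q : σ →₀ ℕ} (h : a ≤ q) :
    p • q + socleExponent p - p • a = p • (q - a) + socleExponent p := by
  ext i
  have := h i
  simp only [Finsupp.tsub_apply, Finsupp.add_apply, Finsupp.smul_apply, smul_eq_mul,
    socleExponent_apply, Nat.mul_sub]
  have := Nat.mul_le_mul_left p this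
  omega

variable [Fact p.Prime]

theorem le_socleExponent_iff {a : σ →₀ ℕ} : a ≤ socleExponent p ↔ ∀ i, a i < p := by
  have := (Fact.out : p.Prime).pos
  simp only [Finsupp.le_def, socleExponent_apply]
  exact forall_congr' fun i ↦ by omega

theorem smul_le_smul_add_socleExponent_iff {a q : σ →₀ ℕ} :
    p • a ≤ p • q + socleExponent p ↔ a ≤ q := by
  have := (Fact.out : p.Prime).pos
  simp only [Finsupp.le_def, Finsupp.add_apply, Finsupp.smul_apply, smul_eq_mul,
    socleExponent_apply]
  refine forall_congr' fun i ↦ ⟨fun h ↦ ?_, fun h ↦ ?_⟩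
  · by_contra! h'
    have := Nat.mul_le_mul_left p h'
    rw [Nat.mul_succ] at this
    omega
  · have := Nat.mul_le_mul_left p h
    omega

theorem smul_add_socleExponent_injective :
    Function.Injective fun q : σ →₀ ℕ ↦ p • q + socleExponent p :=
  (add_left_injective _).comp (smul_right_injective _ (Fact.out : p.Prime).ne_zero)

end SocleExponent

variable {k : Type*} [Field k] {p : ℕ} [Fact p.Prime] [CharP k p] [PerfectRing k p]

variable (p) in
theorem monomial_eq_pow_mul_monomial (a : σ →₀ ℕ) (c : k) :
    monomial a c = monomial (a.mapRange (· / p) (Nat.zero_div p)) ((frobeniusEquiv k p).symm c) ^ p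
      * monomial (a.mapRange (· % p) (Nat.zero_mod p)) 1 := by
  have ha : p • a.mapRange (· / p) (Nat.zero_div p) + a.mapRange (· % p) (Nat.zero_mod p) = a := by
    ext i
    simp only [Finsupp.add_apply, Finsupp.smul_apply, Finsupp.mapRange_apply, smul_eq_mul]
    exact Nat.div_add_mod (a i) p
  rw [monomial_pow, monomial_mul, mul_one, frobeniusEquiv_symm_pow_p, ha]

variable [Finite σ]

variable (p) in
/-- The map `Φ : c X^(p • q + socleExponent p) ↦ c^(1/p) X^q`, other monomials `↦ 0`. -/
noncomputable def frobeniusTrace : MvPolynomial σ k →+ MvPolynomial σ k :=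
  AddMonoidAlgebra.coeffAddEquiv.symm.toAddMonoidHom.comp <|
    (Finsupp.mapRange.addMonoidHom (frobeniusEquiv k p).symm.toAddMonoidHom).comp <|
    (Finsupp.comapDomain.addMonoidHom (smul_add_socleExponent_injective (σ := σ) (p := p))).comp
      AddMonoidAlgebra.coeffAddEquiv.toAddMonoidHom

theorem coeff_frobeniusTrace (f : MvPolynomial σ k) (q : σ →₀ ℕ) :
    coeff q (frobeniusTrace p f) = (frobeniusEquiv k p).symm (coeff (p • q + socleExponent p) f) :=
  rfl

theorem constantCoeff_frobeniusTrace (f : MvPolynomial σ k) :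
    constantCoeff (frobeniusTrace p f) = (frobeniusEquiv k p).symm (coeff (socleExponent p) f) := by
  rw [constantCoeff_eq, coeff_frobeniusTrace, smul_zero, zero_add]

theorem frobeniusTrace_pow_mul (s f : MvPolynomial σ k) :
    frobeniusTrace p (s ^ p * f) = s * frobeniusTrace p f := by
  induction s using MvPolynomial.induction_on' with
  | monomial a c =>
    ext q
    rw [coeff_frobeniusTrace, monomial_pow, coeff_monomial_mul', coeff_monomial_mul']
    by_cases h : a ≤ q
    · rw [if_pos h, if_pos (smul_le_smul_add_socleExponent_iff.mpr h),
        smul_add_socleExponent_tsub_smul h, map_mul, frobeniusEquiv_symm_pow, coeff_frobeniusTrace]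
    · rw [if_neg h, if_neg (mt smul_le_smul_add_socleExponent_iff.mp h), map_zero]
  | add s t hs ht => rw [add_pow_char, add_mul, map_add, hs, ht, add_mul]

theorem frobeniusTrace_monomial_tsub_add [DecidableEq σ] {b b' : σ →₀ ℕ}
    (hb : b ≤ socleExponent p) (hb' : b' ≤ socleExponent p) :
    frobeniusTrace p (monomial (socleExponent p - b + b') (1 : k)) = if b = b' then 1 else 0 := by
  by_cases h : b = b'
  · subst h
    ext q
    rw [if_pos rfl, tsub_add_cancel_of_le hb, coeff_frobeniusTrace, coeff_monomial, coeff_one]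
    rcases eq_or_ne q 0 with hq | hq <;> simp [hq, Ne.symm, (Fact.out : p.Prime).ne_zero]
  · ext q
    rw [if_neg h, coeff_frobeniusTrace, coeff_monomial, if_neg, map_zero, coeff_zero]
    intro hq
    -- at `i` the exponent `p - 1 - b i + b' i` lies in `[0, 2p - 2]` but is not `p - 1`
    obtain ⟨i, hi⟩ := Finsupp.ne_iff.mp h
    have hq := DFunLike.congr_fun hq i
    have := le_socleExponent_iff.mp hb i
    have := le_socleExponent_iff.mp hb' i
    simp only [Finsupp.tsub_apply, Finsupp.add_apply, Finsupp.smul_apply, smul_eq_mul,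
      socleExponent_apply] at hq
    rcases Nat.eq_zero_or_pos (q i) with h0 | h0
    · rw [h0] at hq; omega
    · have := Nat.mul_le_mul_left p h0
      omega

theorem sum_frobeniusTrace_mul_pow_mul [DecidableEq σ] (f : MvPolynomial σ k) :
    ∑ b ∈ Finset.Iic (socleExponent p),
      frobeniusTrace p (f * monomial (socleExponent p - b) 1) ^ p * monomial b 1 = f := by
  induction f using MvPolynomial.induction_on' with
  | monomial a c =>
    rw [monomial_eq_pow_mul_monomial p a c]
    set M := monomial (a.mapRange (· / p) (Nat.zero_div p)) ((frobeniusEquiv k p).symm c)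
    set r := a.mapRange (· % p) (Nat.zero_mod p)
    have hp := (Fact.out : p.Prime).pos
    have hr : r ≤ socleExponent p := le_socleExponent_iff.mpr fun i ↦ Nat.mod_lt _ hp
    have hterm : ∀ b ∈ Finset.Iic (socleExponent p),
        frobeniusTrace p (M ^ p * monomial r 1 * monomial (socleExponent p - b) 1) ^ p
          * monomial b 1 = if b = r then M ^ p * monomial r 1 else 0 := by
      intro b hb
      rw [mul_assoc, monomial_mul, one_mul, add_comm r, frobeniusTrace_pow_mul,
        frobeniusTrace_monomial_tsub_add (Finset.mem_Iic.mp hb) hr]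
      split_ifs with h
      · rw [mul_one, h]
      · rw [mul_zero, zero_pow hp.ne', zero_mul]
    rw [Finset.sum_congr rfl hterm, Finset.sum_ite_eq_of_mem' _ _ _ (Finset.mem_Iic.mpr hr)]
  | add f g hf hg =>
    conv_rhs => rw [← hf, ← hg]
    rw [← Finset.sum_add_distrib]
    refine Finset.sum_congr rfl fun b _ ↦ ?_
    rw [add_mul, map_add, add_pow_char, add_mul]

theorem frobeniusTrace_mem_of_mem_frobeniusPower {I : Ideal (MvPolynomial σ k)}
    {h : MvPolynomial σ k} (hh : h ∈ I.frobeniusPower p) : frobeniusTrace p h ∈ I := by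
  suffices ∀ s, frobeniusTrace p (s * h) ∈ I by simpa using this 1
  induction hh using Submodule.span_induction with
  | mem x hx =>
    obtain ⟨a, ha, rfl⟩ := hx
    exact fun s ↦ by rw [mul_comm, frobeniusTrace_pow_mul]; exact I.mul_mem_right _ ha
  | zero => simp
  | add x y _ _ hx hy => exact fun s ↦ by rw [mul_add, map_add]; exact add_mem (hx s) (hy s)
  | smul t x _ hx => exact fun s ↦ by rw [smul_eq_mul, ← mul_assoc]; exact hx (s * t)

theorem frobeniusTrace_eq_C_of_isHomogeneous {f : MvPolynomial σ k}
    (hf : f.IsHomogeneous (socleExponent (σ := σ) p).degree) :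
    frobeniusTrace p f = C ((frobeniusEquiv k p).symm (coeff (socleExponent p) f)) := by
  classical
  ext q
  rw [coeff_frobeniusTrace, coeff_C]
  split_ifs with hq
  · rw [← hq, smul_zero, zero_add]
  · refine (congrArg _ (hf.coeff_eq_zero ?_)).trans (map_zero _)
    rw [map_add, map_nsmul, smul_eq_mul, ne_eq, add_eq_right, mul_eq_zero, not_or,
      Finsupp.degree_eq_zero_iff]
    exact ⟨(Fact.out : p.Prime).ne_zero, Ne.symm hq⟩

theorem constantCoeff_frobeniusTrace_eq_zero_of_mem {g : MvPolynomial σ k}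
    (hg : g ∈ Ideal.span (Set.range fun i ↦ (X i : MvPolynomial σ k) ^ p)) :
    constantCoeff (frobeniusTrace p g) = 0 := by
  rw [constantCoeff_frobeniusTrace, map_eq_zero_iff _ (frobeniusEquiv k p).symm.injective,
    ← notMem_support_iff]
  intro hsupp
  obtain ⟨i, hi⟩ := mem_span_range_X_pow_iff.mp hg _ hsupp
  rw [socleExponent_apply] at hi
  have := (Fact.out : p.Prime).pos
  omega

theorem frobeniusTrace_monomial_mul_homogeneousComponent {g : MvPolynomial σ k} {a : σ →₀ ℕ}
    (ha : a ≤ socleExponent p) :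
    frobeniusTrace p (monomial (socleExponent p - a) 1 * homogeneousComponent a.degree g) =
      C ((frobeniusEquiv k p).symm (coeff a g)) := by
  have hdeg : (socleExponent p - a).degree + a.degree = (socleExponent (σ := σ) p).degree := by
    rw [← map_add, tsub_add_cancel_of_le ha]
  have hhom := (isHomogeneous_monomial (d := socleExponent p - a) (1 : k) rfl).mul
    (homogeneousComponent_isHomogeneous a.degree g)
  rw [hdeg] at hhom
  rw [frobeniusTrace_eq_C_of_isHomogeneous hhom, coeff_monomial_mul', if_pos tsub_le_self,
    tsub_tsub_cancel_of_le ha, one_mul, coeff_homogeneousComponent, if_pos rfl]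

theorem exists_mem_frobeniusTrace_eq_one {J : Ideal (MvPolynomial σ k)}
    (hJ : J.IsHomogeneous (homogeneousSubmodule σ k))
    (hJp : ¬J ≤ Ideal.span (Set.range fun i ↦ (X i : MvPolynomial σ k) ^ p)) :
    ∃ g ∈ J, frobeniusTrace p g = 1 := by
  obtain ⟨g, hgJ, hg⟩ := SetLike.not_le_iff_exists.mp hJp
  obtain ⟨a, ha, hap⟩ : ∃ a ∈ g.support, ∀ i, a i < p := by
    simpa [mem_span_range_X_pow_iff] using hg
  have hc : (frobeniusEquiv k p).symm (coeff a g) ≠ 0 :=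
    (map_ne_zero _).mpr (mem_support_iff.mp ha)
  refine ⟨C ((frobeniusEquiv k p).symm (coeff a g))⁻¹ ^ p *
    (monomial (socleExponent p - a) 1 * homogeneousComponent a.degree g),
    J.mul_mem_left _ (J.mul_mem_left _ (homogeneousComponent_mem_of_mem hJ hgJ _)), ?_⟩
  rw [frobeniusTrace_pow_mul, frobeniusTrace_monomial_mul_homogeneousComponent
    (le_socleExponent_iff.mpr hap), ← C_mul, inv_mul_cancel₀ hc, C_1]

theorem exists_mem_colon_of_isPInvLinear {I : Ideal (MvPolynomial σ k)}
    {φ : MvPolynomial σ k ⧸ I → MvPolynomial σ k ⧸ I} (hφ : IsPInvLinear p φ) :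
    ∃ g ∈ (I.frobeniusPower p).colon (I : Set (MvPolynomial σ k)),
      ∀ x, φ (Ideal.Quotient.mk I x) = Ideal.Quotient.mk I (frobeniusTrace p (g * x)) := by
  classical
  have hφ0 : φ 0 = 0 := by simpa using hφ.map_add 0 0
  choose t ht using fun b : σ →₀ ℕ ↦
    Ideal.Quotient.mk_surjective (φ (Ideal.Quotient.mk I (monomial b 1)))
  set g := ∑ b ∈ Finset.Iic (socleExponent p), t b ^ p * monomial (socleExponent p - b) 1
  have hg_monomial : ∀ b ≤ socleExponent p, frobeniusTrace p (g * monomial b 1) = t b := by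
    intro b hb
    have hterm : ∀ b' ≤ socleExponent p,
        frobeniusTrace p (t b' ^ p * monomial (socleExponent p - b') 1 * monomial b 1) =
          if b' = b then t b' else 0 := by
      intro b' hb'
      rw [mul_assoc, monomial_mul, one_mul, frobeniusTrace_pow_mul,
        frobeniusTrace_monomial_tsub_add hb' hb, mul_ite, mul_one, mul_zero]
    rw [Finset.sum_mul, map_sum, Finset.sum_congr rfl fun b' hb' ↦ hterm b' (Finset.mem_Iic.mp hb'),
      Finset.sum_ite_eq_of_mem' _ _ _ (Finset.mem_Iic.mpr hb)]
  have hg : ∀ x, Ideal.Quotient.mk I (frobeniusTrace p (g * x)) = φ (Ideal.Quotient.mk I x) := by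
    intro x
    induction x using MvPolynomial.induction_on' with
    | monomial a c =>
      rw [monomial_eq_pow_mul_monomial p a c, mul_left_comm, frobeniusTrace_pow_mul,
        hg_monomial _ (le_socleExponent_iff.mpr fun i ↦ Nat.mod_lt _ (Fact.out : p.Prime).pos),
        map_mul, ht, map_mul, map_pow, hφ.map_pow_mul]
    | add x y hx hy => rw [mul_add, map_add, map_add, hx, hy, map_add, hφ.map_add]
  refine ⟨g, Submodule.mem_colon.mpr fun f hf ↦ ?_, fun x ↦ (hg x).symm⟩
  rw [smul_eq_mul, ← sum_frobeniusTrace_mul_pow_mul (p := p) (g * f)]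
  refine Ideal.sum_mem _ fun b _ ↦ Ideal.mul_mem_right _ _ (Ideal.subset_span ⟨_, ?_, rfl⟩)
  rw [SetLike.mem_coe, ← Ideal.Quotient.eq_zero_iff_mem, mul_assoc, hg,
    Ideal.Quotient.eq_zero_iff_mem.mpr (I.mul_mem_right _ hf), hφ0]

theorem exists_isPInvLinear_of_mem_colon {I : Ideal (MvPolynomial σ k)} {g : MvPolynomial σ k}
    (hg : g ∈ (I.frobeniusPower p).colon (I : Set (MvPolynomial σ k))) :
    ∃ φ : MvPolynomial σ k ⧸ I → MvPolynomial σ k ⧸ I, IsPInvLinear p φ ∧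
      ∀ x, φ (Ideal.Quotient.mk I x) = Ideal.Quotient.mk I (frobeniusTrace p (g * x)) := by
  set lift := Function.surjInv (Ideal.Quotient.mk_surjective (I := I))
  have hφ : ∀ x, Ideal.Quotient.mk I (frobeniusTrace p (g * lift (Ideal.Quotient.mk I x))) =
      Ideal.Quotient.mk I (frobeniusTrace p (g * x)) := by
    intro x
    rw [Ideal.Quotient.eq, ← map_sub, ← mul_sub]
    refine frobeniusTrace_mem_of_mem_frobeniusPower (Submodule.mem_colon.mp hg _ ?_)
    exact Ideal.Quotient.eq.mp (Function.surjInv_eq _ _)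
  refine ⟨fun y ↦ Ideal.Quotient.mk I (frobeniusTrace p (g * lift y)),
    ⟨fun x y ↦ ?_, fun r x ↦ ?_⟩, hφ⟩
  · obtain ⟨x, rfl⟩ := Ideal.Quotient.mk_surjective x
    obtain ⟨y, rfl⟩ := Ideal.Quotient.mk_surjective y
    simp only [← map_add, hφ, mul_add]
  · obtain ⟨r, rfl⟩ := Ideal.Quotient.mk_surjective r
    obtain ⟨x, rfl⟩ := Ideal.Quotient.mk_surjective x
    simp only [← map_pow, ← map_mul, hφ, mul_left_comm g, frobeniusTrace_pow_mul]

end MvPolynomial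

/-- Fedder's criterion: for a homogeneous ideal `I` of `S = k[x₀,…,xₙ]` over a perfect field
of characteristic `p`, the quotient `R = S/I` is F-split if and only if
`(I^{[p]} : I) ⊄ m^{[p]}`, where `m = (x₀,…,xₙ)`. -/
theorem fedders_criterion (p : ℕ) [Fact p.Prime] (k : Type*) [Field k] [CharP k p]
    [PerfectRing k p] (n : ℕ) (I : Ideal (MvPolynomial (Fin (n + 1)) k)) (hI : I ≠ ⊤)
    (hhom : ∀ f ∈ I, ∀ d : ℕ, homogeneousComponent d f ∈ I) :
    (∃ φ : (MvPolynomial (Fin (n + 1)) k ⧸ I) → (MvPolynomial (Fin (n + 1)) k ⧸ I),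
        (∀ x y, φ (x + y) = φ x + φ y) ∧ (∀ r x, φ (r ^ p * x) = r * φ x) ∧ φ 1 = 1)
      ↔ ¬ (Submodule.colon (Ideal.span ((fun a => a ^ p) '' (I : Set (MvPolynomial (Fin (n + 1)) k)))) I ≤
            Ideal.span (Set.range fun i : Fin (n + 1) => (X i : MvPolynomial (Fin (n + 1)) k) ^ p)) := by
  have hhom' := isHomogeneous_homogeneousSubmodule_iff.mpr hhom
  constructor
  · rintro ⟨φ, hadd, hpow, hone⟩ hle
    obtain ⟨g, hg, hφg⟩ := exists_mem_colon_of_isPInvLinear ⟨hadd, hpow⟩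
    have hg1 : frobeniusTrace p g - 1 ∈ I := by
      rw [← Ideal.Quotient.eq, ← mul_one g, ← hφg, map_one, hone]
    have h := constantCoeff_eq_zero_of_mem hI hhom' hg1
    rw [map_sub, constantCoeff_frobeniusTrace_eq_zero_of_mem (hle hg), map_one, zero_sub,
      neg_eq_zero] at h
    exact one_ne_zero h
  · intro hle
    obtain ⟨g, hg, hg1⟩ :=
      exists_mem_frobeniusTrace_eq_one ((hhom'.frobeniusPower p).colon hhom') hle
    obtain ⟨φ, hφ, hφg⟩ := exists_isPInvLinear_of_mem_colon hg
    refine ⟨φ, hφ.map_add, hφ.map_pow_mul, ?_⟩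
    rw [← map_one (Ideal.Quotient.mk I), hφg, mul_one, hg1, map_one]
end

section
/- Let p be a prime, k a perfect field of characteristic p, S = k[x₁,…,xₙ], I an ideal of S, R = S/I, and π : S → R the quotient map. Then for every integer e ≥ 1 and every p^{-e}-linear map φ : R → R there exists a p^{-e}-linear map ψ : S → S with ψ(I) ⊆ I and π ∘ ψ = φ ∘ π; conversely, every p^{-e}-linear ψ : S → S with ψ(I) ⊆ I descends to a p^{-e}-linear map on R. -/
/-!
Over `S = k[x_σ]`, `k` perfect of characteristic `p`, `q = p ^ e`, the monomials with all
exponents `< q` form a basis of `S` over `S ^ q`, since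
`c • x ^ m = (c ^ (1/q) • x ^ (m ⌊/⌋ q)) ^ q * x ^ (m - q • (m ⌊/⌋ q))`.
Hence a `q⁻¹`-linear map out of `S` can take arbitrary values on these monomials, and `φ` on
`S ⧸ I` lifts by choosing preimages of its values on their images; the lift maps `I` into `I`
because `φ 0 = 0`. Descent only needs the quotient map to be a surjective ring map.
-/

open MvPolynomial

/-- For `q = p ^ e` these are the `p⁻ᵉ`-linear maps. -/
structure IsInvPowLinear {R : Type*} [CommRing R] (q : ℕ) (φ : R → R) : Prop where
  map_add : ∀ x y, φ (x + y) = φ x + φ y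
  map_pow_mul : ∀ r x, φ (r ^ q * x) = r * φ x

namespace IsInvPowLinear

variable {R : Type*} [CommRing R] {q : ℕ}

def toAddMonoidHom {φ : R → R} (hφ : IsInvPowLinear q φ) : R →+ R :=
  AddMonoidHom.mk' φ hφ.map_add

@[simp]
lemma coe_toAddMonoidHom {φ : R → R} (hφ : IsInvPowLinear q φ) : ⇑hφ.toAddMonoidHom = φ := rfl

lemma map_zero {φ : R → R} (hφ : IsInvPowLinear q φ) : φ 0 = 0 :=
  _root_.map_zero hφ.toAddMonoidHom

lemma map_sub {φ : R → R} (hφ : IsInvPowLinear q φ) (x y : R) : φ (x - y) = φ x - φ y :=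
  _root_.map_sub hφ.toAddMonoidHom x y

theorem exists_quotient_factor {ψ : R → R} (hψ : IsInvPowLinear q ψ) {I : Ideal R}
    (hI : ∀ a ∈ I, ψ a ∈ I) :
    ∃ φ : R ⧸ I → R ⧸ I, IsInvPowLinear q φ ∧
      ∀ s, Ideal.Quotient.mk I (ψ s) = φ (Ideal.Quotient.mk I s) := by
  have hfac : Function.FactorsThrough (Ideal.Quotient.mk I ∘ ψ) (Ideal.Quotient.mk I) :=
    fun a b hab => by
      simp only [Function.comp_apply, Ideal.Quotient.eq] at hab ⊢
      exact hψ.map_sub a b ▸ hI _ hab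
  set φ := Function.extend (Ideal.Quotient.mk I) (Ideal.Quotient.mk I ∘ ψ) 0
  have hφ : ∀ s, φ (Ideal.Quotient.mk I s) = Ideal.Quotient.mk I (ψ s) := hfac.extend_apply 0
  refine ⟨φ, ⟨fun x y => ?_, fun r x => ?_⟩, fun s => (hφ s).symm⟩
  · obtain ⟨x, rfl⟩ := Ideal.Quotient.mk_surjective x
    obtain ⟨y, rfl⟩ := Ideal.Quotient.mk_surjective y
    rw [← _root_.map_add, hφ, hφ, hφ, hψ.map_add, _root_.map_add]
  · obtain ⟨r, rfl⟩ := Ideal.Quotient.mk_surjective r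
    obtain ⟨x, rfl⟩ := Ideal.Quotient.mk_surjective x
    rw [← map_pow, ← map_mul, hφ, hφ, hψ.map_pow_mul, map_mul]

end IsInvPowLinear

namespace Finsupp

variable {σ : Type*}

lemma smul_floorDiv_le (q : ℕ) (m : σ →₀ ℕ) : q • (m ⌊/⌋ q) ≤ m := fun i => by
  simpa using Nat.mul_div_le (m i) q

lemma smul_add_floorDiv {q : ℕ} (hq : 0 < q) (b m : σ →₀ ℕ) :
    (q • b + m) ⌊/⌋ q = b + m ⌊/⌋ q := by
  ext i
  simp [Nat.mul_add_div hq]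

end Finsupp

section InvPowLift

variable {σ k : Type*} [CommRing k] (q : ℕ) (ρ : k →+* k) (t : (σ →₀ ℕ) → MvPolynomial σ k)

lemma monomial_eq_pow_mul_monomial (m : σ →₀ ℕ) {c d : k} (h : d ^ q = c) :
    monomial m c = monomial (m ⌊/⌋ q) d ^ q * monomial (m - q • (m ⌊/⌋ q)) 1 := by
  rw [monomial_pow, monomial_mul, h, mul_one, add_tsub_cancel_of_le (m.smul_floorDiv_le q)]

noncomputable def invPowLift : MvPolynomial σ k →+ MvPolynomial σ k :=
  (Finsupp.liftAddHom fun m => (AddMonoidHom.mulRight (t (m - q • (m ⌊/⌋ q)))).comp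
    ((monomial (m ⌊/⌋ q)).toAddMonoidHom.comp ρ.toAddMonoidHom)).comp
    AddMonoidAlgebra.coeffAddEquiv.toAddMonoidHom

lemma invPowLift_monomial (m : σ →₀ ℕ) (c : k) :
    invPowLift q ρ t (monomial m c) = monomial (m ⌊/⌋ q) (ρ c) * t (m - q • (m ⌊/⌋ q)) := by
  simp [invPowLift, ← single_eq_monomial]

theorem isInvPowLinear_invPowLift (p e : ℕ) [ExpChar k p] (hρ : ∀ c, ρ c ^ p ^ e = c) :
    IsInvPowLinear (p ^ e) (invPowLift (p ^ e) ρ t) := by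
  have hq : 0 < p ^ e := pow_pos (expChar_pos k p) e
  refine ⟨map_add _, fun r x => ?_⟩
  induction r using MvPolynomial.induction_on' with
  | add r r' hr hr' => rw [add_pow_expChar_pow, add_mul, map_add, hr, hr', add_mul]
  | monomial b d =>
    induction x using MvPolynomial.induction_on' with
    | add x y hx hy => rw [mul_add, map_add, hx, hy, map_add, mul_add]
    | monomial m c =>
      rw [monomial_pow, monomial_mul, invPowLift_monomial, invPowLift_monomial,
        Finsupp.smul_add_floorDiv hq, smul_add, add_tsub_add_eq_tsub_left, map_mul, map_pow,
        hρ, ← mul_assoc, monomial_mul]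

theorem map_invPowLift {R : Type*} [CommRing R] (f : MvPolynomial σ k →+* R) {φ : R → R}
    (hφ : IsInvPowLinear q φ) (hρ : ∀ c, ρ c ^ q = c) (ht : ∀ a, f (t a) = φ (f (monomial a 1)))
    (s : MvPolynomial σ k) : f (invPowLift q ρ t s) = φ (f s) := by
  suffices f.toAddMonoidHom.comp (invPowLift q ρ t) = hφ.toAddMonoidHom.comp f.toAddMonoidHom from
    DFunLike.congr_fun this s
  refine AddMonoidAlgebra.addMonoidHom_ext fun m c => ?_
  simp only [AddMonoidHom.comp_apply, RingHom.toAddMonoidHom_eq_coe, AddMonoidHom.coe_coe, single_eq_monomial,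
    IsInvPowLinear.coe_toAddMonoidHom, invPowLift_monomial]
  rw [map_mul, ht, ← hφ.map_pow_mul, ← map_pow, ← map_mul, ← monomial_eq_pow_mul_monomial q m (hρ c)]

end InvPowLift

theorem IsInvPowLinear.exists_mvPolynomial_lift {σ k : Type*} [CommRing k] (p e : ℕ) [ExpChar k p]
    [PerfectRing k p] {I : Ideal (MvPolynomial σ k)}
    {φ : MvPolynomial σ k ⧸ I → MvPolynomial σ k ⧸ I} (hφ : IsInvPowLinear (p ^ e) φ) :
    ∃ ψ : MvPolynomial σ k → MvPolynomial σ k, IsInvPowLinear (p ^ e) ψ ∧ (∀ a ∈ I, ψ a ∈ I) ∧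
      ∀ s, Ideal.Quotient.mk I (ψ s) = φ (Ideal.Quotient.mk I s) := by
  let ρ : k →+* k := (iterateFrobeniusEquiv k p e).symm
  have hρ : ∀ c, ρ c ^ p ^ e = c := (iterateFrobeniusEquiv k p e).apply_symm_apply
  choose t ht using fun a => Ideal.Quotient.mk_surjective (φ (Ideal.Quotient.mk I (monomial a 1)))
  have hψ := map_invPowLift _ ρ t _ hφ hρ ht
  refine ⟨invPowLift (p ^ e) ρ t, isInvPowLinear_invPowLift ρ t p e hρ, fun a ha => ?_, hψ⟩
  rw [← Ideal.Quotient.eq_zero_iff_mem, hψ, Ideal.Quotient.eq_zero_iff_mem.2 ha, hφ.map_zero]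

theorem lift_and_descend_pe_linear_general (p : ℕ) [Fact p.Prime] (k : Type*) [Field k] [CharP k p]
    [PerfectRing k p] (n : ℕ) (I : Ideal (MvPolynomial (Fin n) k)) (e : ℕ) :
    (∀ φ : (MvPolynomial (Fin n) k ⧸ I) → (MvPolynomial (Fin n) k ⧸ I),
      (∀ x y, φ (x + y) = φ x + φ y) →
      (∀ r x, φ (r ^ p ^ e * x) = r * φ x) →
      ∃ ψ : MvPolynomial (Fin n) k → MvPolynomial (Fin n) k,
        (∀ x y, ψ (x + y) = ψ x + ψ y) ∧
        (∀ r x, ψ (r ^ p ^ e * x) = r * ψ x) ∧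
        (∀ a ∈ I, ψ a ∈ I) ∧
        (∀ s, Ideal.Quotient.mk I (ψ s) = φ (Ideal.Quotient.mk I s))) ∧
    (∀ ψ : MvPolynomial (Fin n) k → MvPolynomial (Fin n) k,
      (∀ x y, ψ (x + y) = ψ x + ψ y) →
      (∀ r x, ψ (r ^ p ^ e * x) = r * ψ x) →
      (∀ a ∈ I, ψ a ∈ I) →
      ∃ φ : (MvPolynomial (Fin n) k ⧸ I) → (MvPolynomial (Fin n) k ⧸ I),
        (∀ x y, φ (x + y) = φ x + φ y) ∧
        (∀ r x, φ (r ^ p ^ e * x) = r * φ x) ∧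
        (∀ s, Ideal.Quotient.mk I (ψ s) = φ (Ideal.Quotient.mk I s))) := by
  constructor
  · intro φ hadd hsemi
    obtain ⟨ψ, hψ, hI, hcomm⟩ := IsInvPowLinear.exists_mvPolynomial_lift p e ⟨hadd, hsemi⟩
    exact ⟨ψ, hψ.map_add, hψ.map_pow_mul, hI, hcomm⟩
  · intro ψ hadd hsemi hI
    obtain ⟨φ, hφ, hcomm⟩ := IsInvPowLinear.exists_quotient_factor ⟨hadd, hsemi⟩ hI
    exact ⟨φ, hφ.map_add, hφ.map_pow_mul, hcomm⟩

/-- Lifting `p⁻ᵉ`-linear maps along `S → R = S/I` for `S = k[x₁,…,xₙ]`: every `p⁻ᵉ`-linear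
map on `R` lifts to a `p⁻ᵉ`-linear map on `S` compatible with `I`, and conversely every
`p⁻ᵉ`-linear map on `S` compatible with `I` descends to `R`. -/
theorem lift_and_descend_pe_linear (p : ℕ) [Fact p.Prime] (k : Type*) [Field k] [CharP k p]
    [PerfectRing k p] (n : ℕ) (I : Ideal (MvPolynomial (Fin n) k)) (e : ℕ) (he : 1 ≤ e) :
    (∀ φ : (MvPolynomial (Fin n) k ⧸ I) → (MvPolynomial (Fin n) k ⧸ I),
      (∀ x y, φ (x + y) = φ x + φ y) →
      (∀ r x, φ (r ^ p ^ e * x) = r * φ x) →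
      ∃ ψ : MvPolynomial (Fin n) k → MvPolynomial (Fin n) k,
        (∀ x y, ψ (x + y) = ψ x + ψ y) ∧
        (∀ r x, ψ (r ^ p ^ e * x) = r * ψ x) ∧
        (∀ a ∈ I, ψ a ∈ I) ∧
        (∀ s, Ideal.Quotient.mk I (ψ s) = φ (Ideal.Quotient.mk I s))) ∧
    (∀ ψ : MvPolynomial (Fin n) k → MvPolynomial (Fin n) k,
      (∀ x y, ψ (x + y) = ψ x + ψ y) →
      (∀ r x, ψ (r ^ p ^ e * x) = r * ψ x) →
      (∀ a ∈ I, ψ a ∈ I) →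
      ∃ φ : (MvPolynomial (Fin n) k ⧸ I) → (MvPolynomial (Fin n) k ⧸ I),
        (∀ x y, φ (x + y) = φ x + φ y) ∧
        (∀ r x, φ (r ^ p ^ e * x) = r * φ x) ∧
        (∀ s, Ideal.Quotient.mk I (ψ s) = φ (Ideal.Quotient.mk I s))) :=
  lift_and_descend_pe_linear_general p k n I e
end

section
/- Let p be a prime and R a reduced commutative ring of characteristic p, and let K be the total ring of fractions of R (the localization of R at its set of nonzerodivisors). If R is F-split, then R is weakly normal: for every z ∈ K with z^p lying in the image of R in K, z itself lies in the image of R in K. -/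
/-!
Write `z = a / s`. If `z ^ p = r` then `s ^ p * r = a ^ p` in `R`, and applying a splitting `φ`
gives `s * φ r = φ (a ^ p) = a`, so `z = φ r`.
-/

section PowRoot

variable {R : Type*} [CommRing R] {n : ℕ} {φ : R → R}
  (hlin : ∀ r x : R, φ (r ^ n * x) = r * φ x) (hone : φ 1 = 1)
include hlin hone

theorem apply_pow_eq_self (a : R) : φ (a ^ n) = a := by
  simpa [hone] using hlin a 1

theorem eq_mul_apply_of_pow_mul_eq_pow {a s r : R} (h : s ^ n * r = a ^ n) : a = s * φ r := by
  rw [← hlin, h, apply_pow_eq_self hlin hone]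

theorem IsLocalization.exists_algebraMap_eq_of_pow_eq_algebraMap {M : Submonoid R}
    (hM : M ≤ nonZeroDivisors R) {S : Type*} [CommRing S] [Algebra R S] [IsLocalization M S]
    {z : S} {r : R} (hr : algebraMap R S r = z ^ n) : ∃ r : R, algebraMap R S r = z := by
  obtain ⟨a, s, rfl⟩ := IsLocalization.exists_mk'_eq M z
  have hpow : (s : R) ^ n * r = a ^ n := by
    apply IsLocalization.injective S hM
    rw [map_mul, map_pow, hr, ← mul_pow, IsLocalization.mk'_spec', map_pow]
  refine ⟨φ r, ?_⟩
  rw [IsLocalization.eq_mk'_iff_mul_eq, ← map_mul, mul_comm,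
    ← eq_mul_apply_of_pow_mul_eq_pow hlin hone hpow]

end PowRoot

theorem fsplit_implies_weaklyNormal_general (p : ℕ) (R : Type*) [CommRing R]
    (φ : R → R)
    (hlin : ∀ r x : R, φ (r ^ p * x) = r * φ x) (hone : φ 1 = 1) :
    ∀ z : FractionRing R, (∃ r : R, algebraMap R (FractionRing R) r = z ^ p) →
      ∃ r : R, algebraMap R (FractionRing R) r = z := by
  rintro z ⟨r, hr⟩
  exact IsLocalization.exists_algebraMap_eq_of_pow_eq_algebraMap hlin hone le_rfl hr

/-- An F-split reduced ring of characteristic `p` is weakly normal: any element `z` of the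
total ring of fractions with `z^p` in (the image of) `R` lies in (the image of) `R`. -/
theorem fsplit_implies_weaklyNormal (p : ℕ) (hp : p.Prime) (R : Type*) [CommRing R]
    [IsReduced R] [CharP R p]
    (φ : R → R) (hadd : ∀ x y : R, φ (x + y) = φ x + φ y)
    (hlin : ∀ r x : R, φ (r ^ p * x) = r * φ x) (hone : φ 1 = 1) :
    ∀ z : FractionRing R, (∃ r : R, algebraMap R (FractionRing R) r = z ^ p) →
      ∃ r : R, algebraMap R (FractionRing R) r = z :=
  fsplit_implies_weaklyNormal_general p R φ hlin hone
end

section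
/- Let p be a prime and f : R → S an injective ring homomorphism of commutative rings of characteristic p that splits as a map of R-modules, i.e., there exists an additive map σ : S → R with σ(f(r)·s) = r·σ(s) for all r ∈ R, s ∈ S and σ ∘ f = id_R. If S is F-split, then R is F-split. -/
theorem fsplit_of_split_inclusion_general (p : ℕ) (R S : Type*) [CommRing R] [CommRing S]
    (f : R →+* S)
    (σ : S → R) (hσadd : ∀ x y : S, σ (x + y) = σ x + σ y)
    (hσlin : ∀ (r : R) (s : S), σ (f r * s) = r * σ s)
    (hσf : ∀ r : R, σ (f r) = r)
    (hS : ∃ φ : S → S, (∀ x y : S, φ (x + y) = φ x + φ y) ∧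
      (∀ r x : S, φ (r ^ p * x) = r * φ x) ∧ φ 1 = 1) :
    ∃ φ : R → R, (∀ x y : R, φ (x + y) = φ x + φ y) ∧
      (∀ r x : R, φ (r ^ p * x) = r * φ x) ∧ φ 1 = 1 := by
  obtain ⟨φ, hφadd, hφlin, hφone⟩ := hS
  refine ⟨fun r => σ (φ (f r)), fun x y => ?_, fun r x => ?_, ?_⟩
  · simp only [map_add, hφadd, hσadd]
  · simp only [map_mul, map_pow, hφlin, hσlin]
  · simpa only [map_one, hφone] using hσf 1

/-- If `R ⊆ S` is a split inclusion of commutative rings of characteristic `p` and `S` is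
F-split, then `R` is F-split. -/
theorem fsplit_of_split_inclusion (p : ℕ) (hp : p.Prime) (R S : Type*) [CommRing R] [CommRing S]
    [CharP R p] [CharP S p] (f : R →+* S) (hf : Function.Injective f)
    (σ : S → R) (hσadd : ∀ x y : S, σ (x + y) = σ x + σ y)
    (hσlin : ∀ (r : R) (s : S), σ (f r * s) = r * σ s)
    (hσf : ∀ r : R, σ (f r) = r)
    (hS : ∃ φ : S → S, (∀ x y : S, φ (x + y) = φ x + φ y) ∧
      (∀ r x : S, φ (r ^ p * x) = r * φ x) ∧ φ 1 = 1) :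
    ∃ φ : R → R, (∀ x y : R, φ (x + y) = φ x + φ y) ∧
      (∀ r x : R, φ (r ^ p * x) = r * φ x) ∧ φ 1 = 1 :=
  fsplit_of_split_inclusion_general p R S f σ hσadd hσlin hσf hS
end

section
/- Let p be a prime and R a reduced Noetherian commutative ring of characteristic p. Let K be the total ring of fractions of R (the localization of R at its set of nonzerodivisors), let S be the integral closure of R in K, and assume S is a finitely generated R-module. Let 𝔠 = { r ∈ R : r·S ⊆ R } be the conductor ideal. Then for every integer e ≥ 1 and every p^{-e}-linear map φ : R → R one has φ(𝔠) ⊆ 𝔠. -/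
/-!
If `r` lies in the conductor and `s = x / y` lies in the normalization, then so does `s ^ q`
with `q = p ^ e`, hence `r * x ^ q = a * y ^ q` for some `a ∈ R`. Applying the `p⁻ᵉ`-linear map
`φ` to this identity of `R` gives `x * φ r = y * φ a`, that is `φ r * s = φ a ∈ R`.
-/

theorem mul_map_eq_mul_map_of_pow_mul_eq {R : Type*} [CommRing R] {q : ℕ} {φ : R → R}
    (hlin : ∀ r x : R, φ (r ^ q * x) = r * φ x) {a r x y : R} (h : a * y ^ q = r * x ^ q) :
    y * φ a = x * φ r := by
  rw [← hlin y a, ← hlin x r, mul_comm (y ^ q), mul_comm (x ^ q), h]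

theorem algebraMap_map_mul_mem_range_of_pow_linear {R K : Type*} [CommRing R] [CommRing K]
    [Algebra R K] [IsFractionRing R K] (S : Subalgebra R K) {q : ℕ} {φ : R → R}
    (hlin : ∀ r x : R, φ (r ^ q * x) = r * φ x) {r : R}
    (hr : ∀ s ∈ S, algebraMap R K r * s ∈ Set.range (algebraMap R K)) :
    ∀ s ∈ S, algebraMap R K (φ r) * s ∈ Set.range (algebraMap R K) := by
  intro s hs
  obtain ⟨a, ha⟩ := hr (s ^ q) (pow_mem hs q)
  obtain ⟨⟨x, y⟩, hxy⟩ := IsLocalization.surj (nonZeroDivisors R) s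
  have hpow : a * (y : R) ^ q = r * x ^ q := by
    apply IsFractionRing.injective R K
    simp only [map_mul, map_pow, ha, ← hxy]
    ring
  refine ⟨φ a, (IsLocalization.map_units K y).mul_left_cancel ?_⟩
  calc algebraMap R K y * algebraMap R K (φ a)
      = algebraMap R K (x * φ r) := by
        rw [← map_mul, mul_map_eq_mul_map_of_pow_mul_eq hlin hpow]
    _ = algebraMap R K y * (algebraMap R K (φ r) * s) := by
        rw [map_mul, ← hxy]; ring

theorem conductor_compatible_general (p : ℕ) (R : Type*) [CommRing R]
    (e : ℕ) (φ : R → R)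
    (hlin : ∀ r x : R, φ (r ^ p ^ e * x) = r * φ x) :
    ∀ r : R,
      (∀ s ∈ integralClosure R (FractionRing R),
        algebraMap R (FractionRing R) r * s ∈ Set.range (algebraMap R (FractionRing R))) →
      (∀ s ∈ integralClosure R (FractionRing R),
        algebraMap R (FractionRing R) (φ r) * s ∈ Set.range (algebraMap R (FractionRing R))) :=
  fun _ ↦ algebraMap_map_mul_mem_range_of_pow_linear _ hlin

/-- Every `p⁻ᵉ`-linear map on a reduced Noetherian ring `R` of characteristic `p` (with
module-finite normalization) is compatible with the conductor ideal of `R` in its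
normalization `S` inside the total ring of fractions `K`. -/
theorem conductor_compatible (p : ℕ) (hp : p.Prime) (R : Type*) [CommRing R] [IsReduced R]
    [IsNoetherianRing R] [CharP R p]
    (hfin : Module.Finite R (integralClosure R (FractionRing R)))
    (e : ℕ) (he : 1 ≤ e) (φ : R → R)
    (hadd : ∀ x y : R, φ (x + y) = φ x + φ y)
    (hlin : ∀ r x : R, φ (r ^ p ^ e * x) = r * φ x) :
    ∀ r : R,
      (∀ s ∈ integralClosure R (FractionRing R),
        algebraMap R (FractionRing R) r * s ∈ Set.range (algebraMap R (FractionRing R))) →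
      (∀ s ∈ integralClosure R (FractionRing R),
        algebraMap R (FractionRing R) (φ r) * s ∈ Set.range (algebraMap R (FractionRing R))) :=
  conductor_compatible_general p R e φ hlin
end

section
/- Let p be a prime and R a reduced Noetherian commutative ring of characteristic p. Let K be the total ring of fractions of R (the localization of R at its set of nonzerodivisors), let S be the integral closure of R in K, and assume S is a finitely generated R-module. Then for every integer e ≥ 1, every p^{-e}-linear map φ : R → R extends to the normalization: there exists a p^{-e}-linear map ψ : S → S with ψ(r) = φ(r) for all r ∈ R (identifying R with its image in S). -/
/-!
Since `a / s = a s^(q-1) / s^q`, the only `q⁻¹`-linear extension of `φ` to the ring of fractions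
is `ψ (a / s) = φ (a s^(q-1)) / s`, and `q⁻¹`-linearity of `φ` makes it well defined. To see that
`ψ` preserves the normalization `S`, pick a nonzerodivisor `c` with `c S ⊆ R` (possible since `S`
is module-finite). The conductor `{y | y S ⊆ R}` is stable under multiplication by `ψ s` for
`s ∈ S`: if `y t = u ∈ R` then `ψ s · y t = ψ (u^q s)` and `u^q s = u^(q-1) · y t s ∈ R`. Hence
`c (ψ s)^n ∈ R` for all `n`, so `ψ s` is almost integral, hence integral over the Noetherian `R`.
-/
open scoped nonZeroDivisors

namespace Localization

variable {R : Type*} [CommRing R] (M : Submonoid R) {q : ℕ} {φ : R → R}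

noncomputable def extendInvPowLinear (hq : 0 < q) (hlin : ∀ r x : R, φ (r ^ q * x) = r * φ x)
    (x : Localization M) : Localization M :=
  x.liftOn (fun a s ↦ mk (φ (a * (s : R) ^ (q - 1))) s) fun {a c b d} h ↦ by
    obtain ⟨m, rfl⟩ := Nat.exists_eq_add_one_of_ne_zero hq.ne'
    obtain ⟨u, hu⟩ := r_iff_exists.1 h
    refine mk_eq_mk_iff.2 (r_iff_exists.2 ⟨u, ?_⟩)
    simp only [Nat.add_sub_cancel] at hu ⊢
    calc (u : R) * (d * φ (a * (b : R) ^ m)) = φ ((u * d : R) ^ (m + 1) * (a * (b : R) ^ m)) := by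
          rw [hlin]; ring
      _ = φ ((u * b : R) ^ (m + 1) * (c * (d : R) ^ m)) := by
          congr 1; linear_combination ((u : R) ^ m * (b : R) ^ m * (d : R) ^ m) * hu
      _ = u * (b * φ (c * (d : R) ^ m)) := by rw [hlin]; ring

variable {M} (hq : 0 < q) (hlin : ∀ r x : R, φ (r ^ q * x) = r * φ x)

theorem extendInvPowLinear_mk (a : R) (s : M) :
    extendInvPowLinear M hq hlin (mk a s) = mk (φ (a * (s : R) ^ (q - 1))) s :=
  rfl

theorem extendInvPowLinear_algebraMap (r : R) :
    extendInvPowLinear M hq hlin (algebraMap R _ r) = algebraMap R _ (φ r) := by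
  simp [← mk_one_eq_algebraMap, extendInvPowLinear_mk]

theorem extendInvPowLinear_pow_mul (y x : Localization M) :
    extendInvPowLinear M hq hlin (y ^ q * x) = y * extendInvPowLinear M hq hlin x := by
  induction y with | H y => ?_
  induction x with | H x => ?_
  obtain ⟨b, t⟩ := y
  obtain ⟨a, s⟩ := x
  obtain ⟨m, rfl⟩ := Nat.exists_eq_add_one_of_ne_zero hq.ne'
  simp only [mk_pow, mk_mul, extendInvPowLinear_mk, Nat.add_sub_cancel, Submonoid.coe_mul,
    SubmonoidClass.coe_pow]
  rw [show b ^ (m + 1) * a * ((t : R) ^ (m + 1) * s) ^ m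
      = (b * (t : R) ^ m) ^ (m + 1) * (a * (s : R) ^ m) by ring, hlin]
  refine mk_eq_mk_iff.2 (r_iff_exists.2 ⟨1, ?_⟩)
  simp only [Submonoid.coe_mul, SubmonoidClass.coe_pow]
  ring

theorem extendInvPowLinear_add (hadd : ∀ x y : R, φ (x + y) = φ x + φ y) (x y : Localization M) :
    extendInvPowLinear M hq hlin (x + y)
      = extendInvPowLinear M hq hlin x + extendInvPowLinear M hq hlin y := by
  induction x with | H x => ?_
  induction y with | H y => ?_
  obtain ⟨a, s⟩ := x
  obtain ⟨b, t⟩ := y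
  obtain ⟨m, rfl⟩ := Nat.exists_eq_add_one_of_ne_zero hq.ne'
  simp only [add_mk, extendInvPowLinear_mk, Nat.add_sub_cancel, Submonoid.coe_mul]
  rw [show ((s : R) * b + t * a) * (s * t) ^ m
      = (s : R) ^ (m + 1) * (b * (t : R) ^ m) + (t : R) ^ (m + 1) * (a * (s : R) ^ m) by ring,
    hadd, hlin, hlin]

theorem extendInvPowLinear_mul_mem_one_div {A : Subalgebra R (Localization M)} {s y : Localization M}
    (hs : s ∈ A) (hy : y ∈ 1 / Subalgebra.toSubmodule A) :
    extendInvPowLinear M hq hlin s * y ∈ 1 / Subalgebra.toSubmodule A := by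
  obtain ⟨m, rfl⟩ := Nat.exists_eq_add_one_of_ne_zero hq.ne'
  rw [Submodule.mem_div_iff_forall_mul_mem] at hy ⊢
  intro t ht
  obtain ⟨u, hu⟩ := Submodule.mem_one.1 (hy t ht)
  obtain ⟨v, hv⟩ := Submodule.mem_one.1 (hy (t * s) (A.mul_mem ht hs))
  refine Submodule.mem_one.2 ⟨φ (u ^ m * v), ?_⟩
  have hus : algebraMap R _ u * s = algebraMap R _ v := by rw [hu, hv, mul_assoc]
  calc algebraMap R _ (φ (u ^ m * v))
      = extendInvPowLinear M hq hlin (algebraMap R _ u ^ (m + 1) * s) := by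
        rw [← extendInvPowLinear_algebraMap hq hlin, map_mul, map_pow, ← hus, pow_succ, mul_assoc]
    _ = _ := by rw [extendInvPowLinear_pow_mul, hu]; ring

theorem isIntegral_extendInvPowLinear [IsNoetherianRing R] (hM : M ≤ R⁰)
    (hfin : Module.Finite R (integralClosure R (Localization M))) {s : Localization M}
    (hs : IsIntegral R s) : IsIntegral R (extendInvPowLinear M hq hlin s) := by
  set S := integralClosure R (Localization M)
  obtain ⟨c, hc, hcS⟩ := FractionalIdeal.isFractional_of_fg (S := M)
    ((Module.Finite.iff_fg (N := Subalgebra.toSubmodule S)).1 hfin)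
  have hc_mem : algebraMap R _ c ∈ 1 / Subalgebra.toSubmodule S := by
    refine Submodule.mem_div_iff_forall_mul_mem.2 fun t ht ↦ ?_
    obtain ⟨u, hu⟩ := hcS t ht
    exact Submodule.mem_one.2 ⟨u, by rw [hu, Algebra.smul_def]⟩
  have hpow (n : ℕ) : algebraMap R _ c * extendInvPowLinear M hq hlin s ^ n
      ∈ 1 / Subalgebra.toSubmodule S := by
    induction n with
    | zero => simpa using hc_mem
    | succ n ih =>
      rw [pow_succ', mul_left_comm]
      exact extendInvPowLinear_mul_mem_one_div hq hlin hs ih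
  refine IsAlmostIntegral.isIntegral_of_nonZeroDivisors_le_comap
    ⟨c, hM hc, fun n ↦ ?_⟩ (IsLocalization.nonZeroDivisors_le_comap M _)
  simpa [Algebra.smul_def, Submodule.mem_one] using
    Submodule.mem_div_iff_forall_mul_mem.1 (hpow n) 1 S.one_mem

end Localization

theorem pe_linear_extends_to_normalization_general (p : ℕ) (hp : p.Prime) (R : Type*) [CommRing R]
    [IsNoetherianRing R]
    (hfin : Module.Finite R (integralClosure R (FractionRing R)))
    (e : ℕ) (φ : R → R)
    (hadd : ∀ x y : R, φ (x + y) = φ x + φ y)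
    (hlin : ∀ r x : R, φ (r ^ p ^ e * x) = r * φ x) :
    ∃ ψ : integralClosure R (FractionRing R) → integralClosure R (FractionRing R),
      (∀ x y, ψ (x + y) = ψ x + ψ y) ∧
      (∀ s x : integralClosure R (FractionRing R), ψ (s ^ p ^ e * x) = s * ψ x) ∧
      (∀ r : R, ψ (algebraMap R (integralClosure R (FractionRing R)) r) =
        algebraMap R (integralClosure R (FractionRing R)) (φ r)) := by
  have hq : 0 < p ^ e := pow_pos hp.pos e
  refine ⟨fun x ↦ ⟨Localization.extendInvPowLinear R⁰ hq hlin x,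
      Localization.isIntegral_extendInvPowLinear hq hlin le_rfl hfin x.2⟩,
    fun x y ↦ ?_, fun s x ↦ ?_, fun r ↦ ?_⟩
  · exact Subtype.ext (Localization.extendInvPowLinear_add hq hlin hadd x.1 y.1)
  · exact Subtype.ext (Localization.extendInvPowLinear_pow_mul hq hlin s.1 x.1)
  · exact Subtype.ext (Localization.extendInvPowLinear_algebraMap (M := R⁰) hq hlin r)

/-- Every `p⁻ᵉ`-linear map on a reduced Noetherian ring `R` of characteristic `p` (with
module-finite normalization) extends to a `p⁻ᵉ`-linear map on the normalization `S` of `R`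
in its total ring of fractions. -/
theorem pe_linear_extends_to_normalization (p : ℕ) (hp : p.Prime) (R : Type*) [CommRing R]
    [IsReduced R] [IsNoetherianRing R] [CharP R p]
    (hfin : Module.Finite R (integralClosure R (FractionRing R)))
    (e : ℕ) (he : 1 ≤ e) (φ : R → R)
    (hadd : ∀ x y : R, φ (x + y) = φ x + φ y)
    (hlin : ∀ r x : R, φ (r ^ p ^ e * x) = r * φ x) :
    ∃ ψ : integralClosure R (FractionRing R) → integralClosure R (FractionRing R),
      (∀ x y, ψ (x + y) = ψ x + ψ y) ∧
      (∀ s x : integralClosure R (FractionRing R), ψ (s ^ p ^ e * x) = s * ψ x) ∧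
      (∀ r : R, ψ (algebraMap R (integralClosure R (FractionRing R)) r) =
        algebraMap R (integralClosure R (FractionRing R)) (φ r)) :=
  pe_linear_extends_to_normalization_general p hp R hfin e φ hadd hlin
end

section
/- Let p be a prime, k a field of characteristic p, and f = y² − x³ ∈ k[x,y]. For each integer e ≥ 1 set ν_e = max{ r ∈ ℕ : f^r ∉ (x^{p^e}, y^{p^e}) }. Then the limit of ν_e / p^e as e → ∞ exists and equals: 1/2 if p = 2; 2/3 if p = 3; 5/6 if p ≡ 1 (mod 6); and 5/6 − 1/(6p) if p ≡ 5 (mod 6). -/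
/-!
Expanding `f = y² - x³`, the power `f ^ r` lies outside `(x ^ q, y ^ q)` in characteristic `p`
exactly when some `m ≤ r` has `p ∤ r.choose m`, `3 (r - m) < q` and `2 m < q`. This forces
`6 r + 5 ≤ 5 q`, so `ν_e ≤ 5 (pᵉ - 1) / 6`.

For `p ≡ 1 (mod 6)` the bound is attained: every base-`p` digit of `(pᵉ - 1) / 6` is `(p - 1) / 6`,
and Lucas' theorem provides a surviving term.

Otherwise let `b = ⌊5 p / 6⌋`, so that `6 b + 5 > 5 p`. By Lucas' theorem only the terms with
`pᴱ ∣ m` of `f ^ (pᴱ b)` survive, so `f ^ (pᴱ b) ∉ (x ^ pᴱ⁺¹, y ^ pᴱ⁺¹)` would give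
`f ^ b ∉ (x ^ p, y ^ p)`, which the bound above excludes; and Lucas' theorem again exhibits a
surviving term of `f ^ (pᴱ b - 1)`. Hence `ν_{E+1} = pᴱ b - 1`, and `ν_e / pᵉ → b / p`.
-/

open MvPolynomial Filter

section Binomial

variable {p : ℕ} [hp : Fact p.Prime]

theorem dvd_choose_iff_mod_or_div (n k : ℕ) :
    p ∣ n.choose k ↔ p ∣ (n % p).choose (k % p) ∨ p ∣ (n / p).choose (k / p) := by
  rw [Choose.choose_modEq_choose_mod_mul_choose_div_nat.dvd_iff dvd_rfl, hp.out.dvd_mul]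

theorem dvd_choose_iff_mod_pow_or_div_pow (E n k : ℕ) :
    p ∣ n.choose k ↔
      p ∣ (n % p ^ E).choose (k % p ^ E) ∨ p ∣ (n / p ^ E).choose (k / p ^ E) := by
  induction E generalizing n k with
  | zero => simp [Nat.mod_one, hp.out.ne_one]
  | succ E ih =>
    have hdvd : p ^ E ∣ p ^ (E + 1) := pow_dvd_pow p E.le_succ
    rw [ih n k, dvd_choose_iff_mod_or_div (n / p ^ E), ih (n % p ^ (E + 1)),
      Nat.mod_mod_of_dvd _ hdvd, Nat.mod_mod_of_dvd _ hdvd, pow_succ,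
      Nat.mod_mul_right_div_self, Nat.mod_mul_right_div_self, Nat.div_div_eq_div_mul,
      Nat.div_div_eq_div_mul, or_assoc]

theorem not_dvd_choose_of_lt {a j : ℕ} (ha : a < p) (hj : j ≤ a) : ¬ p ∣ a.choose j :=
  hp.out.coprime_iff_not_dvd.mp (Nat.Prime.coprime_choose_of_lt hp.out ha hj)

theorem not_dvd_choose_pow_sub_one {E s : ℕ} (hs : s < p ^ E) : ¬ p ∣ (p ^ E - 1).choose s := by
  induction E generalizing s with
  | zero => simp_all [hp.out.ne_one]
  | succ E ih =>
    have hp0 : 0 < p := hp.out.pos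
    have hpE : 0 < p ^ E := pow_pos hp0 E
    have hdigits : p ^ (E + 1) - 1 = p * (p ^ E - 1) + (p - 1) := by
      have := Nat.le_mul_of_pos_right p hpE
      rw [pow_succ, Nat.mul_sub_one, mul_comm]; omega
    rw [hdigits, dvd_choose_iff_mod_or_div, Nat.mul_add_mod, Nat.mul_add_div hp0,
      Nat.mod_eq_of_lt (Nat.sub_one_lt hp0.ne'), Nat.div_eq_of_lt (Nat.sub_one_lt hp0.ne'),
      add_zero, not_or]
    refine ⟨not_dvd_choose_of_lt (Nat.sub_one_lt hp0.ne') ?_, ih ?_⟩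
    · exact Nat.le_sub_one_of_lt (Nat.mod_lt s hp0)
    · rw [Nat.div_lt_iff_lt_mul hp0, ← pow_succ]; exact hs

theorem not_dvd_choose_mul_pow_add_pow_sub_one {E a j s : ℕ} (ha : a < p) (hj : j ≤ a)
    (hs : s < p ^ E) : ¬ p ∣ (a * p ^ E + (p ^ E - 1)).choose (j * p ^ E + s) := by
  have hpE : 0 < p ^ E := pow_pos hp.out.pos E
  rw [dvd_choose_iff_mod_pow_or_div_pow E, mul_comm a, mul_comm j, Nat.mul_add_mod,
    Nat.mul_add_mod, Nat.mul_add_div hpE, Nat.mul_add_div hpE,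
    Nat.mod_eq_of_lt (Nat.sub_one_lt hpE.ne'), Nat.mod_eq_of_lt hs,
    Nat.div_eq_of_lt (Nat.sub_one_lt hpE.ne'), Nat.div_eq_of_lt hs, add_zero, add_zero, not_or]
  exact ⟨not_dvd_choose_pow_sub_one hs, not_dvd_choose_of_lt ha hj⟩

theorem not_dvd_choose_mul_geom_sum {E c d : ℕ} (hc : c < p) (hd : d ≤ c) :
    ¬ p ∣ (c * ∑ i ∈ Finset.range E, p ^ i).choose (d * ∑ i ∈ Finset.range E, p ^ i) := by
  induction E with
  | zero => simp [hp.out.ne_one]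
  | succ E ih =>
    have hp0 : 0 < p := hp.out.pos
    rw [geom_sum_succ, mul_add, mul_add, mul_one, mul_one, mul_left_comm c p, mul_left_comm d p,
      dvd_choose_iff_mod_or_div, Nat.mul_add_mod, Nat.mul_add_mod, Nat.mul_add_div hp0,
      Nat.mul_add_div hp0, Nat.mod_eq_of_lt hc, Nat.mod_eq_of_lt (hd.trans_lt hc),
      Nat.div_eq_of_lt hc, Nat.div_eq_of_lt (hd.trans_lt hc), add_zero, add_zero, not_or]
    exact ⟨not_dvd_choose_of_lt hc hd, ih⟩

theorem pow_dvd_of_not_dvd_choose_pow_mul {E b i : ℕ} (h : ¬ p ∣ (p ^ E * b).choose i) :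
    p ^ E ∣ i := by
  rw [dvd_choose_iff_mod_pow_or_div_pow E, Nat.mul_mod_right, not_or] at h
  by_contra hi
  rw [Nat.choose_eq_zero_of_lt (Nat.pos_of_ne_zero (mt Nat.dvd_of_mod_eq_zero hi))] at h
  exact h.1 (dvd_zero p)

end Binomial

section Expansion

variable {k : Type*} [CommRing k]

theorem X_pow_sub_X_pow_pow (a b r : ℕ) :
    ((X 1 : MvPolynomial (Fin 2) k) ^ a - X 0 ^ b) ^ r =
      ∑ m ∈ Finset.range (r + 1),
        monomial (Finsupp.single 0 (b * (r - m)) + Finsupp.single 1 (a * m))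
          ((-1) ^ (m + r) * (r.choose m : k)) := by
  rw [sub_pow]
  refine Finset.sum_congr rfl fun m _ => ?_
  rw [← pow_mul, ← pow_mul, X_pow_eq_monomial, X_pow_eq_monomial,
    ← mul_one ((-1) ^ (m + r) * _ : k), ← C_mul_monomial, ← one_mul (1 : k), ← monomial_mul]
  simp only [map_mul, map_pow, map_neg, map_one, map_natCast, mul_one]
  ring

theorem mem_support_X_pow_sub_X_pow_pow_iff (p : ℕ) [CharP k p] {a : ℕ} (ha : a ≠ 0) (b : ℕ)
    {r : ℕ} {d : Fin 2 →₀ ℕ} :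
    d ∈ (((X 1 : MvPolynomial (Fin 2) k) ^ a - X 0 ^ b) ^ r).support ↔
      ∃ m ≤ r, ¬ p ∣ r.choose m ∧
        d = Finsupp.single 0 (b * (r - m)) + Finsupp.single 1 (a * m) := by
  have hcoeff : ∀ m, ((-1) ^ (m + r) * (r.choose m : k) ≠ 0 ↔ ¬ p ∣ r.choose m) := fun m => by
    rw [Ne, neg_one_pow_mul_eq_zero_iff, CharP.cast_eq_zero_iff k p]
  rw [mem_support_iff, X_pow_sub_X_pow_pow, coeff_sum]
  simp only [coeff_monomial]
  constructor
  · intro hd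
    obtain ⟨m, hm, hne⟩ := Finset.exists_ne_zero_of_sum_ne_zero hd
    rw [ne_eq, ite_eq_right_iff, Classical.not_imp] at hne
    exact ⟨m, Nat.lt_succ_iff.mp (Finset.mem_range.mp hm), (hcoeff m).mp hne.2, hne.1.symm⟩
  · rintro ⟨m, hm, hchoose, rfl⟩
    rw [Finset.sum_eq_single m, if_pos rfl]
    · exact (hcoeff m).mpr hchoose
    · intro m' _ hm'
      rw [if_neg]
      intro heq
      have := congrArg (· 1) heq
      simp only [Finsupp.add_apply, Finsupp.single_apply] at this
      exact hm' (Nat.eq_of_mul_eq_mul_left (Nat.pos_of_ne_zero ha) (by simpa using this))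
    · intro hm'
      exact absurd (Finset.mem_range.mpr (Nat.lt_succ_of_le hm)) hm'

theorem X_pow_sub_X_pow_pow_mem_span_iff (p : ℕ) [CharP k p] {a : ℕ} (ha : a ≠ 0) (b q r : ℕ) :
    ((X 1 : MvPolynomial (Fin 2) k) ^ a - X 0 ^ b) ^ r ∈
        Ideal.span {(X 0 : MvPolynomial (Fin 2) k) ^ q, X 1 ^ q} ↔
      ∀ m ≤ r, ¬ p ∣ r.choose m → q ≤ b * (r - m) ∨ q ≤ a * m := by
  have hgens : ({(X 0 : MvPolynomial (Fin 2) k) ^ q, X 1 ^ q} : Set _) =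
      (fun s => monomial s (1 : k)) '' {Finsupp.single 0 q, Finsupp.single 1 q} := by
    rw [Set.image_insert_eq, Set.image_singleton, X_pow_eq_monomial, X_pow_eq_monomial]
  rw [hgens, mem_ideal_span_monomial_image]
  simp only [mem_support_X_pow_sub_X_pow_pow_iff p ha, Set.mem_insert_iff,
    Set.mem_singleton_iff]
  constructor
  · intro h m hm hchoose
    simpa [Finsupp.single_le_iff] using h _ ⟨m, hm, hchoose, rfl⟩
  · rintro h _ ⟨m, hm, hchoose, rfl⟩
    simpa [Finsupp.single_le_iff] using h m hm hchoose

end Expansion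

theorem sSup_setOf_pow_notMem_eq {R : Type*} [CommSemiring R] {I : Ideal R} {f : R} {N : ℕ}
    (hN : f ^ N ∉ I) (hN1 : f ^ (N + 1) ∈ I) : sSup {r : ℕ | f ^ r ∉ I} = N := by
  have hset : {r : ℕ | f ^ r ∉ I} = Set.Iic N := by
    ext r
    refine ⟨fun hr => ?_, fun hr hmem => hN ?_⟩
    · by_contra hlt
      exact hr (by
        rw [← Nat.sub_add_cancel (Nat.lt_of_not_le hlt), pow_add]
        exact I.mul_mem_left _ hN1)
    · rw [← Nat.sub_add_cancel (Set.mem_Iic.mp hr), pow_add]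
      exact I.mul_mem_left _ hmem
  rw [hset, csSup_Iic]

theorem tendsto_div_pow_of_mul_add_eq {u : ℕ → ℝ} {x A B C : ℝ} (hx : 1 < x) (hA : A ≠ 0)
    (h : ∀ᶠ e in atTop, A * u e + B = C * x ^ e) :
    Tendsto (fun e => u e / x ^ e) atTop (nhds (C / A)) := by
  have hgeom : Tendsto (fun e => C / A - B / A * x⁻¹ ^ e) atTop (nhds (C / A)) := by
    simpa using tendsto_const_nhds.sub ((tendsto_pow_atTop_nhds_zero_of_lt_one
      (inv_nonneg.mpr (by linarith)) (inv_lt_one_of_one_lt₀ hx)).const_mul (B / A))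
  refine hgeom.congr' (h.mono fun e he => ?_)
  have hxe : x ^ e ≠ 0 := pow_ne_zero e (by linarith)
  rw [inv_pow, eq_div_iff hxe]
  field_simp
  linarith

/-- `f ^ r ∉ (x ^ q, y ^ q)` for the cusp `f = y² - x³` in characteristic `p`, read off the
binomial expansion of `f ^ r`. -/
def CuspPowSurvives (p q r : ℕ) : Prop :=
  ∃ m ≤ r, ¬ p ∣ r.choose m ∧ 3 * (r - m) < q ∧ 2 * m < q

theorem CuspPowSurvives.six_mul_add_five_le {p q r : ℕ} (h : CuspPowSurvives p q r) :
    6 * r + 5 ≤ 5 * q := by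
  obtain ⟨m, hm, -, h3, h2⟩ := h
  omega

theorem CuspPowSurvives.of_pow_mul {p : ℕ} [hp : Fact p.Prime] {E b : ℕ}
    (h : CuspPowSurvives p (p ^ (E + 1)) (p ^ E * b)) : CuspPowSurvives p p b := by
  obtain ⟨m, hm, hchoose, h3, h2⟩ := h
  obtain ⟨j, rfl⟩ := pow_dvd_of_not_dvd_choose_pow_mul hchoose
  have hpE : 0 < p ^ E := pow_pos hp.out.pos E
  rw [← Nat.mul_sub] at h3
  refine ⟨j, Nat.le_of_mul_le_mul_left hm hpE,
    by rwa [← Choose.choose_pow_mul_pow_mul_modEq_choose_nat.dvd_iff dvd_rfl], ?_, ?_⟩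
  · exact Nat.lt_of_mul_lt_mul_left (a := p ^ E) (by rwa [← pow_succ, mul_left_comm])
  · exact Nat.lt_of_mul_lt_mul_left (a := p ^ E) (by rwa [← pow_succ, mul_left_comm])

theorem cuspPowSurvives_two (E : ℕ) : CuspPowSurvives 2 (2 ^ (E + 1)) (2 ^ E * 1 - 1) := by
  refine ⟨2 ^ E * 1 - 1, le_rfl, by simp, by simp, ?_⟩
  have := Nat.one_le_two_pow (n := E)
  rw [pow_succ]
  omega

theorem cuspPowSurvives_pow_mul_sub_one {p : ℕ} [Fact p.Prime] (hodd : Odd p) {E a j : ℕ}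
    (ha : a < p) (hj : j ≤ a) (h2 : 2 * j + 1 ≤ p) (h3 : 6 * (a - j) + 3 ≤ 2 * p) :
    CuspPowSurvives p (p ^ (E + 1)) (p ^ E * (a + 1) - 1) := by
  obtain ⟨u, hu⟩ := hodd.pow (n := E)
  have hjP : j * p ^ E ≤ a * p ^ E := Nat.mul_le_mul_right _ hj
  have h2P : 2 * (j * p ^ E) + p ^ E ≤ p ^ (E + 1) := by rw [pow_succ']; nlinarith
  have h3P : 6 * (a * p ^ E - j * p ^ E) + 3 * p ^ E ≤ 2 * p ^ (E + 1) := by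
    rw [← Nat.sub_mul, pow_succ']; nlinarith
  have hr : p ^ E * (a + 1) - 1 = a * p ^ E + (p ^ E - 1) := by
    rw [mul_add, mul_one, mul_comm]; omega
  rw [hr]
  exact ⟨j * p ^ E + u, by omega, not_dvd_choose_mul_pow_add_pow_sub_one ha hj (by omega),
    by omega, by omega⟩

noncomputable def cuspNu (k : Type*) [CommRing k] (p e : ℕ) : ℕ :=
  sSup {r : ℕ | ((X 1 : MvPolynomial (Fin 2) k) ^ 2 - X 0 ^ 3) ^ r ∉
    Ideal.span {(X 0 : MvPolynomial (Fin 2) k) ^ p ^ e, X 1 ^ p ^ e}}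

section CuspNu

variable {k : Type*} [CommRing k] {p : ℕ}

theorem cusp_pow_notMem_span_iff [CharP k p] (q r : ℕ) :
    ((X 1 : MvPolynomial (Fin 2) k) ^ 2 - X 0 ^ 3) ^ r ∉
        Ideal.span {(X 0 : MvPolynomial (Fin 2) k) ^ q, X 1 ^ q} ↔ CuspPowSurvives p q r := by
  rw [X_pow_sub_X_pow_pow_mem_span_iff p two_ne_zero]
  simp only [CuspPowSurvives, not_forall, not_or, not_le, exists_prop]

theorem cuspNu_eq [CharP k p] {e N : ℕ} (hN : CuspPowSurvives p (p ^ e) N)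
    (hN1 : ¬ CuspPowSurvives p (p ^ e) (N + 1)) : cuspNu k p e = N :=
  sSup_setOf_pow_notMem_eq ((cusp_pow_notMem_span_iff _ _).mpr hN)
    (not_not.mp (mt (cusp_pow_notMem_span_iff _ _).mp hN1))

theorem cuspNu_succ_add_one [Fact p.Prime] [CharP k p] {E b : ℕ} (hb : 5 * p < 6 * b + 5)
    (h : CuspPowSurvives p (p ^ (E + 1)) (p ^ E * b - 1)) :
    cuspNu k p (E + 1) + 1 = p ^ E * b := by
  have hp : p.Prime := Fact.out
  have hpos : 1 ≤ p ^ E * b := Nat.mul_pos (pow_pos hp.pos E) (by have := hp.pos; omega)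
  rw [cuspNu_eq h fun h' => ?_, Nat.sub_add_cancel hpos]
  rw [Nat.sub_add_cancel hpos] at h'
  have := h'.of_pow_mul.six_mul_add_five_le
  omega

theorem tendsto_cuspNu_div_pow [Fact p.Prime] [CharP k p] {b : ℕ} (hb : 5 * p < 6 * b + 5)
    (h : ∀ E, CuspPowSurvives p (p ^ (E + 1)) (p ^ E * b - 1)) :
    Tendsto (fun e => (cuspNu k p e : ℝ) / (p : ℝ) ^ e) atTop (nhds (b / p)) := by
  have hp : 1 < (p : ℝ) := by exact_mod_cast (Fact.out : p.Prime).one_lt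
  refine tendsto_div_pow_of_mul_add_eq (B := p) hp (by positivity)
    (eventually_atTop.2 ⟨1, fun e he => ?_⟩)
  obtain ⟨E, rfl⟩ := Nat.exists_eq_add_of_le' he
  have hE : (cuspNu k p (E + 1) : ℝ) + 1 = p ^ E * b := by
    exact_mod_cast cuspNu_succ_add_one hb (h E)
  linear_combination (p : ℝ) * hE

theorem six_mul_cuspNu_add_five [Fact p.Prime] [CharP k p] (hp : p % 6 = 1) (e : ℕ) :
    6 * cuspNu k p e + 5 = 5 * p ^ e := by
  obtain ⟨t, rfl⟩ : ∃ t, p = 6 * t + 1 := ⟨p / 6, by omega⟩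
  have ht : 0 < t := by have := (Fact.out : (6 * t + 1).Prime).two_le; omega
  set R := ∑ i ∈ Finset.range e, (6 * t + 1) ^ i
  have hR : 6 * (t * R) + 1 = (6 * t + 1) ^ e := by
    rw [← geom_sum_mul_add (6 * t) e]; ring
  have hsurv : CuspPowSurvives (6 * t + 1) ((6 * t + 1) ^ e) (5 * t * R) := by
    refine ⟨3 * t * R, ?_, not_dvd_choose_mul_geom_sum (by omega) (by omega), ?_, ?_⟩ <;>
      simp only [mul_assoc] <;> omega
  rw [cuspNu_eq hsurv fun h => ?_]
  · rw [mul_assoc]; omega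
  · have := h.six_mul_add_five_le
    rw [mul_assoc] at this
    omega

end CuspNu

theorem Nat.Prime.eq_two_or_eq_three_or_mod_six {p : ℕ} (hp : p.Prime) :
    p = 2 ∨ p = 3 ∨ p % 6 = 1 ∨ p % 6 = 5 := by
  have h2 := hp.eq_one_or_self_of_dvd 2
  have h3 := hp.eq_one_or_self_of_dvd 3
  omega

/-- The F-pure threshold of the cuspidal cubic `y² = x³`: with
`ν_e = max{ r : f^r ∉ (x^{pᵉ}, y^{pᵉ}) }` for `f = y² − x³`, the limit of `ν_e/pᵉ` exists and
equals `1/2` if `p = 2`, `2/3` if `p = 3`, `5/6` if `p ≡ 1 (mod 6)`, and `5/6 − 1/(6p)` if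
`p ≡ 5 (mod 6)`. -/
theorem fpt_cuspidal_cubic (p : ℕ) [Fact p.Prime] (k : Type*) [Field k] [CharP k p] :
    Tendsto
      (fun e : ℕ =>
        ((sSup {r : ℕ |
            ((X 1 : MvPolynomial (Fin 2) k) ^ 2 - X 0 ^ 3) ^ r ∉
              Ideal.span {(X 0 : MvPolynomial (Fin 2) k) ^ p ^ e, X 1 ^ p ^ e}} : ℕ) : ℝ) /
          (p : ℝ) ^ e)
      atTop
      (nhds (if p = 2 then 1 / 2 else if p = 3 then 2 / 3
        else if p % 6 = 1 then 5 / 6 else 5 / 6 - 1 / (6 * (p : ℝ)))) := by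
  change Tendsto (fun e => (cuspNu k p e : ℝ) / (p : ℝ) ^ e) atTop _
  rcases (Fact.out : p.Prime).eq_two_or_eq_three_or_mod_six with rfl | rfl | hp | hp
  · simpa using tendsto_cuspNu_div_pow (b := 1) (by norm_num) cuspPowSurvives_two
  · convert tendsto_cuspNu_div_pow (k := k) (p := 3) (b := 2) (by norm_num) fun E =>
      cuspPowSurvives_pow_mul_sub_one (a := 1) (j := 1) (by decide) (by norm_num) le_rfl
        (by norm_num) (by norm_num) using 2
    norm_num
  · rw [if_neg (by omega), if_neg (by omega), if_pos hp]
    exact tendsto_div_pow_of_mul_add_eq (A := 6) (B := 5)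
      (by exact_mod_cast (Fact.out : p.Prime).one_lt) (by norm_num)
      (Eventually.of_forall fun e => by exact_mod_cast six_mul_cuspNu_add_five hp e)
  · obtain ⟨t, rfl⟩ : ∃ t, p = 6 * t + 5 := ⟨p / 6, by omega⟩
    rw [if_neg (by omega), if_neg (by omega), if_neg (by omega)]
    convert tendsto_cuspNu_div_pow (k := k) (p := 6 * t + 5) (b := 5 * t + 4) (by omega)
      fun E => cuspPowSurvives_pow_mul_sub_one (a := 5 * t + 3) (j := 3 * t + 2)
        (Nat.odd_iff.mpr (by omega)) (by omega) (by omega) (by omega) (by omega) using 2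
    push_cast
    field_simp
    ring
end

section
/- Let k be a perfect field of characteristic 2, let R = k[x,y,t]/(x² − t·y²), and let Q ⊂ R be the prime ideal generated by the images of x and y. Then the localization R_Q is not F-pure: there is no additive map φ : R_Q → R_Q satisfying φ(r² s) = r φ(s) for all r, s ∈ R_Q and φ(1) = 1. In other words, in characteristic 2 the pinch point fails to be F-pure along the entire double line x = y = 0. -/
set_option maxHeartbeats 2000000
set_option synthInstance.maxHeartbeats 1000000

open MvPolynomial

/-!
A map `φ` with `φ (r² s) = r φ s` and `φ 1 = 1` gives `x = φ (x²) = φ (y² t) = y φ t`, so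
`c x ∈ (y)` in `R` for some `c ∉ Q`. Writing `c x = b y` and pushing this through the
normalization `ν : x ↦ s y, t ↦ s²` gives `s ν(c) = ν(b)`; setting `y = 0` turns it into
`X · expand 2 c̄ = expand 2 b̄` in `k[X]`, where `c̄, b̄` are the images in `R / Q ≅ k[X]`.
The odd coefficients of this identity force `c̄ = 0`, i.e. `c ∈ Q`.
-/

theorem eq_mul_apply_of_sq_eq_sq_mul {S : Type*} [Monoid S] {φ : S → S}
    (hφ : ∀ r s, φ (r ^ 2 * s) = r * φ s) (hφ₁ : φ 1 = 1) {x y t : S}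
    (h : x ^ 2 = y ^ 2 * t) : x = y * φ t := by
  calc x = x * φ 1 := by rw [hφ₁, mul_one]
    _ = φ (x ^ 2 * 1) := (hφ _ _).symm
    _ = y * φ t := by rw [mul_one, h, hφ]

theorem exists_mem_mul_mem_span_singleton_of_sq_eq_sq_mul {R : Type*} [CommRing R]
    {M : Submonoid R} (S : Type*) [CommRing S] [Algebra R S] [IsLocalization M S] {φ : S → S}
    (hφ : ∀ r s, φ (r ^ 2 * s) = r * φ s) (hφ₁ : φ 1 = 1) {x y t : R}
    (h : x ^ 2 = y ^ 2 * t) : ∃ c ∈ M, c * x ∈ Ideal.span {y} := by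
  have hx : algebraMap R S x = algebraMap R S y * φ (algebraMap R S t) :=
    eq_mul_apply_of_sq_eq_sq_mul hφ hφ₁ (by rw [← map_pow, ← map_pow, ← map_mul, h])
  refine (IsLocalization.algebraMap_mem_map_algebraMap_iff M S _ x).mp ?_
  rw [Ideal.map_span, Set.image_singleton, hx]
  exact Ideal.mul_mem_right _ _ (Ideal.mem_span_singleton_self _)

theorem Polynomial.eq_zero_of_X_mul_expand_eq_expand {R : Type*} [CommSemiring R] {n : ℕ}
    (hn : 2 ≤ n) {p q : Polynomial R}
    (h : Polynomial.X * Polynomial.expand R n p = Polynomial.expand R n q) : p = 0 := by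
  ext m
  have hcoeff := congrArg (Polynomial.coeff · (n * m + 1)) h
  have hndvd : ¬ n ∣ n * m + 1 := fun hdvd => by
    have := Nat.dvd_one.mp ((Nat.dvd_add_right (dvd_mul_right n m)).mp hdvd)
    omega
  simpa [Polynomial.coeff_X_mul, Polynomial.coeff_expand_mul' (by omega : 0 < n),
    Polynomial.coeff_expand (by omega : 0 < n), hndvd] using hcoeff

abbrev PinchPoint (k : Type*) [Field k] : Type _ :=
  MvPolynomial (Fin 3) k ⧸ Ideal.span {(X 0 : MvPolynomial (Fin 3) k) ^ 2 - X 2 * X 1 ^ 2}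

namespace PinchPoint

noncomputable section

variable (k : Type*) [Field k]

abbrev x : PinchPoint k := Ideal.Quotient.mk _ (X 0)
abbrev y : PinchPoint k := Ideal.Quotient.mk _ (X 1)
abbrev t : PinchPoint k := Ideal.Quotient.mk _ (X 2)

abbrev doubleLine : Ideal (PinchPoint k) := Ideal.span {x k, y k}

theorem x_sq : x k ^ 2 = y k ^ 2 * t k := by
  have h := Ideal.Quotient.eq_zero_iff_mem.mpr
    (Ideal.mem_span_singleton_self ((X 0 : MvPolynomial (Fin 3) k) ^ 2 - X 2 * X 1 ^ 2))
  rw [map_sub, sub_eq_zero] at h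
  simpa [mul_comm] using h

variable {k} in
def liftₐ {A : Type*} [CommRing A] [Algebra k A] (g : Fin 3 → A)
    (hg : g 0 ^ 2 = g 2 * g 1 ^ 2) : PinchPoint k →ₐ[k] A :=
  Ideal.Quotient.liftₐ _ (aeval g) fun a ha => by
    obtain ⟨b, rfl⟩ := Ideal.mem_span_singleton'.mp ha
    simp [hg]

variable {k} in
@[simp] theorem liftₐ_mk {A : Type*} [CommRing A] [Algebra k A] (g : Fin 3 → A)
    (hg : g 0 ^ 2 = g 2 * g 1 ^ 2) (p : MvPolynomial (Fin 3) k) :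
    liftₐ g hg (Ideal.Quotient.mk _ p) = aeval g p := rfl

def toLine : PinchPoint k →ₐ[k] Polynomial k :=
  liftₐ ![0, 0, Polynomial.X] (by simp)

/-- `x ↦ s y`, `y ↦ y`, `t ↦ s²`, where `y, s` are `X 0, X 1`: the normalization, `s = x / y`. -/
def normalization : PinchPoint k →ₐ[k] MvPolynomial (Fin 2) k :=
  liftₐ ![X 1 * X 0, X 0, X 1 ^ 2] (by simp; ring)

theorem ker_toLine : RingHom.ker (toLine k) = doubleLine k := by
  refine le_antisymm (fun c hc => ?_) ?_
  · -- `aeval t` splits `toLine` modulo `(x, y)`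
    have hsection : (Ideal.Quotient.mkₐ k (doubleLine k)).comp
        ((Polynomial.aeval (t k)).comp (toLine k)) = Ideal.Quotient.mkₐ k (doubleLine k) := by
      refine Ideal.Quotient.algHom_ext _ (MvPolynomial.algHom_ext fun i => ?_)
      fin_cases i <;> simp [toLine, t] <;>
        exact (Ideal.Quotient.eq_zero_iff_mem.mpr (Ideal.subset_span (by simp))).symm
    simpa [RingHom.mem_ker.mp hc, eq_comm (a := (0 : PinchPoint k ⧸ doubleLine k)),
      Ideal.Quotient.eq_zero_iff_mem] using AlgHom.congr_fun hsection c
  · rw [Ideal.span_le]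
    rintro _ (rfl | rfl) <;> simp [toLine]

theorem doubleLine_isPrime : (doubleLine k).IsPrime :=
  ker_toLine k ▸ RingHom.ker_isPrime _

theorem normalization_x : normalization k (x k) = X 1 * X 0 := by
  simp [normalization]

theorem normalization_y : normalization k (y k) = X 0 := by
  simp [normalization]

theorem aeval_normalization (c : PinchPoint k) :
    aeval ![0, Polynomial.X] (normalization k c) = Polynomial.expand k 2 (toLine k c) := by
  suffices (aeval ![0, Polynomial.X]).comp (normalization k) =
      (Polynomial.expand k 2).comp (toLine k) from AlgHom.congr_fun this c
  refine Ideal.Quotient.algHom_ext _ (MvPolynomial.algHom_ext fun i => ?_)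
  fin_cases i <;> simp [normalization, toLine]

theorem mem_doubleLine_of_mul_x_mem_span_y {c : PinchPoint k}
    (hc : c * x k ∈ Ideal.span {y k}) : c ∈ doubleLine k := by
  obtain ⟨b, hb⟩ := Ideal.mem_span_singleton'.mp hc
  have hν : X 1 * normalization k c = normalization k b := by
    refine mul_right_cancel₀ (X_ne_zero (0 : Fin 2)) ?_
    have := congrArg (normalization k) hb
    simp only [map_mul, normalization_x, normalization_y] at this
    linear_combination -this
  have hexp := congrArg (aeval ![(0 : Polynomial k), Polynomial.X]) hν
  simp only [map_mul, aeval_normalization] at hexp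
  rw [← ker_toLine, RingHom.mem_ker]
  exact Polynomial.eq_zero_of_X_mul_expand_eq_expand le_rfl (by simpa using hexp)

end

end PinchPoint

theorem pinch_point_not_Fpure_general (k : Type*) [Field k] :
    (Ideal.span {Ideal.Quotient.mk
        (Ideal.span {(X 0 : MvPolynomial (Fin 3) k) ^ 2 - X 2 * X 1 ^ 2}) (X 0),
      Ideal.Quotient.mk
        (Ideal.span {(X 0 : MvPolynomial (Fin 3) k) ^ 2 - X 2 * X 1 ^ 2}) (X 1)}).IsPrime ∧
    ∀ (hQ : (Ideal.span {Ideal.Quotient.mk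
        (Ideal.span {(X 0 : MvPolynomial (Fin 3) k) ^ 2 - X 2 * X 1 ^ 2}) (X 0),
      Ideal.Quotient.mk
        (Ideal.span {(X 0 : MvPolynomial (Fin 3) k) ^ 2 - X 2 * X 1 ^ 2}) (X 1)}).IsPrime),
      letI := hQ
      ¬ ∃ φ : Localization.AtPrime (Ideal.span {Ideal.Quotient.mk
            (Ideal.span {(X 0 : MvPolynomial (Fin 3) k) ^ 2 - X 2 * X 1 ^ 2}) (X 0),
          Ideal.Quotient.mk
            (Ideal.span {(X 0 : MvPolynomial (Fin 3) k) ^ 2 - X 2 * X 1 ^ 2}) (X 1)}) →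
          Localization.AtPrime (Ideal.span {Ideal.Quotient.mk
            (Ideal.span {(X 0 : MvPolynomial (Fin 3) k) ^ 2 - X 2 * X 1 ^ 2}) (X 0),
          Ideal.Quotient.mk
            (Ideal.span {(X 0 : MvPolynomial (Fin 3) k) ^ 2 - X 2 * X 1 ^ 2}) (X 1)}),
        (∀ x y, φ (x + y) = φ x + φ y) ∧
        (∀ r s, φ (r ^ 2 * s) = r * φ s) ∧ φ 1 = 1 := by
  open PinchPoint in
  refine ⟨doubleLine_isPrime k, fun hQ => ?_⟩
  rintro ⟨φ, -, hφ, hφ₁⟩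
  obtain ⟨c, hc, hcx⟩ := exists_mem_mul_mem_span_singleton_of_sq_eq_sq_mul
    (M := (doubleLine k).primeCompl) (φ := φ) _ hφ hφ₁ (x_sq k)
  exact hc (mem_doubleLine_of_mul_x_mem_span_y k hcx)

/-- In characteristic 2 the pinch point `R = k[x,y,t]/(x² − t y²)` is not F-pure along the
double line: the prime `Q = (x, y)` is prime, and the localization `R_Q` admits no
`2⁻¹`-linear map `φ` with `φ 1 = 1`. -/
theorem pinch_point_not_Fpure (k : Type*) [Field k] [CharP k 2] [PerfectRing k 2] :
    (Ideal.span {Ideal.Quotient.mk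
        (Ideal.span {(X 0 : MvPolynomial (Fin 3) k) ^ 2 - X 2 * X 1 ^ 2}) (X 0),
      Ideal.Quotient.mk
        (Ideal.span {(X 0 : MvPolynomial (Fin 3) k) ^ 2 - X 2 * X 1 ^ 2}) (X 1)}).IsPrime ∧
    ∀ (hQ : (Ideal.span {Ideal.Quotient.mk
        (Ideal.span {(X 0 : MvPolynomial (Fin 3) k) ^ 2 - X 2 * X 1 ^ 2}) (X 0),
      Ideal.Quotient.mk
        (Ideal.span {(X 0 : MvPolynomial (Fin 3) k) ^ 2 - X 2 * X 1 ^ 2}) (X 1)}).IsPrime),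
      letI := hQ
      ¬ ∃ φ : Localization.AtPrime (Ideal.span {Ideal.Quotient.mk
            (Ideal.span {(X 0 : MvPolynomial (Fin 3) k) ^ 2 - X 2 * X 1 ^ 2}) (X 0),
          Ideal.Quotient.mk
            (Ideal.span {(X 0 : MvPolynomial (Fin 3) k) ^ 2 - X 2 * X 1 ^ 2}) (X 1)}) →
          Localization.AtPrime (Ideal.span {Ideal.Quotient.mk
            (Ideal.span {(X 0 : MvPolynomial (Fin 3) k) ^ 2 - X 2 * X 1 ^ 2}) (X 0),
          Ideal.Quotient.mk
            (Ideal.span {(X 0 : MvPolynomial (Fin 3) k) ^ 2 - X 2 * X 1 ^ 2}) (X 1)}),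
        (∀ x y, φ (x + y) = φ x + φ y) ∧
        (∀ r s, φ (r ^ 2 * s) = r * φ s) ∧ φ 1 = 1 :=
  pinch_point_not_Fpure_general k
end

section
/- Let p be a prime and R a Noetherian F-finite integral domain of characteristic p that is strongly F-regular, and let W ⊆ R be a multiplicative set with 0 ∉ W. Then the localization W⁻¹R is strongly F-regular: for every c ∈ W⁻¹R with c ≠ 0 there exist an integer e ≥ 1 and a p^{-e}-linear map φ : W⁻¹R → W⁻¹R with φ(c) = 1. -/
/-!
A `p^{-e}`-linear map `φ` on `R` extends to `W⁻¹R` by `a / t ↦ φ (a t^{q-1}) / t` with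
`q = p^e`; the relation `φ (r^q x) = r φ x` is exactly what makes this well defined and
`p^{-e}`-linear.
Given `c = a / s ≠ 0`, strong F-regularity of `R` yields `φ` with `φ a = 1`, and precomposing
the extension of `φ` with multiplication by `s` sends `a / s` to `φ a = 1`.
-/

namespace Localization

variable {R : Type*} [CommRing R] {W : Submonoid R}

/-- `a / t ↦ φ (a * t ^ n) / t`; the exponent `q = p ^ e` is written `n + 1` so that no
truncated subtraction `q - 1` appears. -/
noncomputable def extendPowLinear (φ : R → R) (n : ℕ)
    (hφ : ∀ r x : R, φ (r ^ (n + 1) * x) = r * φ x) :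
    Localization W → Localization W := fun z =>
  z.liftOn (fun a t => mk (φ (a * (t : R) ^ n)) t) <| by
    intro a c t u h
    obtain ⟨v, hv⟩ := r_iff_exists.mp h
    rw [mk_eq_mk_iff, r_iff_exists]
    refine ⟨v, ?_⟩
    dsimp only at hv
    calc (v : R) * (u * φ (a * (t : R) ^ n))
        = φ ((v * u : R) ^ (n + 1) * (a * (t : R) ^ n)) := by rw [hφ]; ring
      _ = φ ((v * t : R) ^ (n + 1) * (c * (u : R) ^ n)) := by
          congr 1; linear_combination ((v * u * t : R) ^ n) * hv
      _ = v * (t * φ (c * (u : R) ^ n)) := by rw [hφ]; ring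

section

variable (φ : R → R) (n : ℕ) (hφ : ∀ r x : R, φ (r ^ (n + 1) * x) = r * φ x)

theorem extendPowLinear_mk (a : R) (t : W) :
    extendPowLinear φ n hφ (mk a t) = mk (φ (a * (t : R) ^ n)) t :=
  liftOn_mk _ _ _ _

theorem extendPowLinear_algebraMap (a : R) :
    extendPowLinear (W := W) φ n hφ (algebraMap R _ a) = algebraMap R _ (φ a) := by
  rw [← mk_one_eq_algebraMap, extendPowLinear_mk, OneMemClass.coe_one, one_pow, mul_one,
    mk_one_eq_algebraMap]

theorem extendPowLinear_add (hadd : ∀ x y : R, φ (x + y) = φ x + φ y)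
    (x y : Localization W) :
    extendPowLinear φ n hφ (x + y) = extendPowLinear φ n hφ x + extendPowLinear φ n hφ y := by
  induction x, y using induction_on₂ with
  | H x y =>
    obtain ⟨a, s⟩ := x
    obtain ⟨b, t⟩ := y
    rw [add_mk, extendPowLinear_mk, extendPowLinear_mk, extendPowLinear_mk, add_mk]
    congr 1
    have hArg : (s * b + t * a) * ((s * t : W) : R) ^ n
        = (s : R) ^ (n + 1) * (b * (t : R) ^ n) + (t : R) ^ (n + 1) * (a * (s : R) ^ n) := by
      push_cast; ring
    rw [hArg, hadd, hφ, hφ]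

theorem extendPowLinear_pow_mul (r x : Localization W) :
    extendPowLinear φ n hφ (r ^ (n + 1) * x) = r * extendPowLinear φ n hφ x := by
  induction r, x using induction_on₂ with
  | H r x =>
    obtain ⟨c, u⟩ := r
    obtain ⟨a, s⟩ := x
    rw [mk_pow, mk_mul, extendPowLinear_mk, extendPowLinear_mk, mk_mul, mk_eq_mk_iff,
      r_iff_exists]
    refine ⟨1, ?_⟩
    have hArg : c ^ (n + 1) * a * ((u ^ (n + 1) * s : W) : R) ^ n
        = (c * (u : R) ^ n) ^ (n + 1) * (a * (s : R) ^ n) := by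
      push_cast; ring
    rw [hArg, hφ]
    push_cast; ring

end

theorem exists_powLinear_mk_eq_one (φ : R → R) (n : ℕ)
    (hadd : ∀ x y : R, φ (x + y) = φ x + φ y)
    (hφ : ∀ r x : R, φ (r ^ (n + 1) * x) = r * φ x)
    {a : R} (ha : φ a = 1) (s : W) :
    ∃ ψ : Localization W → Localization W,
      (∀ x y, ψ (x + y) = ψ x + ψ y) ∧
      (∀ r x, ψ (r ^ (n + 1) * x) = r * ψ x) ∧ ψ (mk a s) = 1 := by
  refine ⟨fun x => extendPowLinear φ n hφ (algebraMap R _ s * x), ?_, ?_, ?_⟩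
  · intro x y
    simp only [mul_add, extendPowLinear_add φ n hφ hadd]
  · intro r x
    simp only [mul_left_comm _ (r ^ (n + 1)), extendPowLinear_pow_mul]
  · simp only [mk_eq_mk', IsLocalization.mk'_spec', extendPowLinear_algebraMap, ha, map_one]

end Localization

theorem stronglyFRegular_localization_general (p : ℕ) [Fact p.Prime] (R : Type*) [CommRing R]
    (hSFR : ∀ c : R, c ≠ 0 → ∃ e : ℕ, 1 ≤ e ∧ ∃ φ : R → R,
      (∀ x y : R, φ (x + y) = φ x + φ y) ∧
      (∀ r x : R, φ (r ^ p ^ e * x) = r * φ x) ∧ φ c = 1)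
    (W : Submonoid R) :
    ∀ c : Localization W, c ≠ 0 → ∃ e : ℕ, 1 ≤ e ∧ ∃ φ : Localization W → Localization W,
      (∀ x y : Localization W, φ (x + y) = φ x + φ y) ∧
      (∀ r x : Localization W, φ (r ^ p ^ e * x) = r * φ x) ∧ φ c = 1 := by
  intro c hc
  induction c using Localization.induction_on with
  | H c =>
    obtain ⟨a, s⟩ := c
    have ha : a ≠ 0 := by
      rintro rfl
      exact hc (Localization.mk_zero s)
    obtain ⟨e, he, φ, hadd, hφ, hφa⟩ := hSFR a ha
    obtain ⟨n, hn⟩ : ∃ n, p ^ e = n + 1 :=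
      Nat.exists_eq_add_one.mpr (pow_pos (Fact.out : p.Prime).pos e)
    rw [hn] at hφ
    exact ⟨e, he, hn ▸ Localization.exists_powLinear_mk_eq_one φ n hadd hφ hφa s⟩

/-- A localization of a strongly F-regular Noetherian F-finite domain of characteristic `p`
at a multiplicative set not containing `0` is strongly F-regular. -/
theorem stronglyFRegular_localization (p : ℕ) [Fact p.Prime] (R : Type*) [CommRing R]
    [IsDomain R] [IsNoetherianRing R] [CharP R p]
    (hFF : (frobenius R p).Finite)
    (hSFR : ∀ c : R, c ≠ 0 → ∃ e : ℕ, 1 ≤ e ∧ ∃ φ : R → R,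
      (∀ x y : R, φ (x + y) = φ x + φ y) ∧
      (∀ r x : R, φ (r ^ p ^ e * x) = r * φ x) ∧ φ c = 1)
    (W : Submonoid R) (hW : (0 : R) ∉ W) :
    ∀ c : Localization W, c ≠ 0 → ∃ e : ℕ, 1 ≤ e ∧ ∃ φ : Localization W → Localization W,
      (∀ x y : Localization W, φ (x + y) = φ x + φ y) ∧
      (∀ r x : Localization W, φ (r ^ p ^ e * x) = r * φ x) ∧ φ c = 1 :=
  stronglyFRegular_localization_general p R hSFR W
end
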